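/- arXiv:2502.08286 — 5 statements merged into one kernel-verified Lean document; each statement's English description precedes it below -/
import Mathlib

section
/- Assume X and Y are nonempty and bounded. For y ∈ ℝ^m let U(y) = {u ∈ ℝ^q : u ≥ 0, −Aᵀu ≤ C y + g}. If (x*, y*) ∈ X × Y minimizes z over X × Y with optimal value z*, then z* = min_{y ∈ Y} max_{u ∈ U(y)} (e·y − a·u) and z* = max_{u ∈ U(y*)} (e·y* − a·u). Conversely, if z* = min_{y ∈ Y} max_{u ∈ U(y)} (e·y − a·u) is attained at y* ∈ Y, then z* is the minimum of z over X × Y and there exists x* ∈ X with z(x*, y*) = z*. -/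
/-! For fixed `y`, minimizing `z(·, y)` over `X` is a linear program with cost vector `C y + g`,
and `max_{u ∈ U(y)} (e·y − a·u)` is its LP dual. As `X` is a nonempty bounded polyhedron, both
optima are attained and coincide (strong duality), so the min-max value at `y` is the inner
minimum of `z(·, y)`; minimizing `z` over `X × Y` is minimizing that inner minimum over `y ∈ Y`.

Strong duality comes from Farkas' lemma, i.e. from separating a point from the cone
`{M u + s | u, s ≥ 0}`. That this cone is closed follows from the conic Carathéodory theorem: it is
the finite union of images of orthants on which the generating linear map is injective. -/

open Matrix

section NonnegCone

variable {ι E : Type*} [Fintype ι]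

def supportedOn (s : Set ι) : Submodule ℝ (ι → ℝ) := Submodule.pi sᶜ fun _ => ⊥

omit [Fintype ι] in
lemma mem_supportedOn {s : Set ι} {c : ι → ℝ} : c ∈ supportedOn s ↔ ∀ i ∉ s, c i = 0 := by
  simp [supportedOn, Submodule.mem_pi]

lemma exists_nonneg_sub_smul_eq_zero {c μ : ι → ℝ} (hc : 0 ≤ c) (hμ : ∃ i, 0 < μ i) :
    ∃ i₀, 0 < μ i₀ ∧ ∃ t : ℝ, 0 ≤ c - t • μ ∧ (c - t • μ) i₀ = 0 := by
  classical
  obtain ⟨i₀, hi₀, hmin⟩ := (Finset.univ.filter (0 < μ ·)).exists_min_image (fun i => c i / μ i)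
    (by simpa [Finset.Nonempty] using hμ)
  rw [Finset.mem_filter] at hi₀
  refine ⟨i₀, hi₀.2, c i₀ / μ i₀, fun i => ?_, by simp [div_mul_cancel₀ _ hi₀.2.ne']⟩
  simp only [Pi.zero_apply, Pi.sub_apply, Pi.smul_apply, smul_eq_mul, sub_nonneg]
  rcases le_or_gt (μ i) 0 with h | h
  · exact (mul_nonpos_of_nonneg_of_nonpos (div_nonneg (hc i₀) hi₀.2.le) h).trans (hc i)
  · exact (le_div_iff₀ h).mp (hmin i (by simpa using h))

variable [AddCommGroup E] [Module ℝ E]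

omit [Fintype ι] in
lemma exists_mem_map_eq_zero_of_not_injOn {L : (ι → ℝ) →ₗ[ℝ] E} {V : Submodule ℝ (ι → ℝ)}
    (h : ¬Set.InjOn L V) : ∃ ν ∈ V, L ν = 0 ∧ ∃ i, 0 < ν i := by
  simp only [Set.InjOn, not_forall] at h
  obtain ⟨x, hx, y, hy, hxy, hne⟩ := h
  obtain ⟨i, hi⟩ := Function.ne_iff.mp (sub_ne_zero.mpr hne)
  have hL : L (x - y) = 0 := by rw [map_sub, hxy, sub_self]
  rcases hi.lt_or_gt with h | h
  · exact ⟨y - x, sub_mem hy hx, by rw [← neg_sub, map_neg, hL, neg_zero], i, by simpa using h⟩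
  · exact ⟨x - y, sub_mem hx hy, hL, i, h⟩

theorem exists_nonneg_injOn_supportedOn (L : (ι → ℝ) →ₗ[ℝ] E) {c : ι → ℝ} (hc : 0 ≤ c) :
    ∃ s : Set ι, ∃ c' ∈ supportedOn s, 0 ≤ c' ∧ L c' = L c ∧ Set.InjOn L (supportedOn s) := by
  classical
  suffices ∀ (s : Finset ι) (c : ι → ℝ), 0 ≤ c → c ∈ supportedOn (s : Set ι) →
      ∃ t : Set ι, ∃ c' ∈ supportedOn t, 0 ≤ c' ∧ L c' = L c ∧ Set.InjOn L (supportedOn t) from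
    this Finset.univ c hc (mem_supportedOn.mpr fun i hi => absurd (Finset.mem_univ i) hi)
  intro s
  induction s using Finset.strongInduction with
  | H s ih =>
    intro c hc hcs
    by_cases hinj : Set.InjOn L (supportedOn (s : Set ι))
    · exact ⟨s, c, hcs, hc, rfl, hinj⟩
    obtain ⟨ν, hνs, hLν, i, hi⟩ := exists_mem_map_eq_zero_of_not_injOn hinj
    obtain ⟨i₀, hi₀, t, hnonneg, hzero⟩ := exists_nonneg_sub_smul_eq_zero hc ⟨i, hi⟩
    have hi₀s : i₀ ∈ s := by
      by_contra h
      exact hi₀.ne' (mem_supportedOn.mp hνs i₀ h)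
    have hsupp : c - t • ν ∈ supportedOn ((s.erase i₀ : Finset ι) : Set ι) := by
      refine mem_supportedOn.mpr fun j hj => ?_
      by_cases hji : j = i₀
      · rwa [hji]
      · have hjs : j ∉ (s : Set ι) := fun h => hj (Finset.mem_erase.mpr ⟨hji, h⟩)
        simp [mem_supportedOn.mp hcs j hjs, mem_supportedOn.mp hνs j hjs]
    obtain ⟨u, c', hc'u, hc'0, hLc', hinj'⟩ := ih _ (Finset.erase_ssubset hi₀s) _ hnonneg hsupp
    exact ⟨u, c', hc'u, hc'0, by rw [hLc', map_sub, map_smul, hLν, smul_zero, sub_zero], hinj'⟩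

theorem isClosed_image_nonneg [TopologicalSpace E] [IsTopologicalAddGroup E] [ContinuousSMul ℝ E]
    [T2Space E] (L : (ι → ℝ) →ₗ[ℝ] E) : IsClosed (L '' {c | 0 ≤ c}) := by
  have hunion : L '' {c | 0 ≤ c} =
      ⋃ s ∈ {s : Set ι | Set.InjOn L (supportedOn s)}, L '' (supportedOn s ∩ {c | 0 ≤ c}) := by
    ext x
    simp only [Set.mem_image, Set.mem_iUnion, Set.mem_ofPred_eq, Set.mem_inter_iff, SetLike.mem_coe]
    constructor
    · rintro ⟨c, hc, rfl⟩
      obtain ⟨s, c', hc's, hc'0, hLc', hinj⟩ := exists_nonneg_injOn_supportedOn L hc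
      exact ⟨s, hinj, c', ⟨hc's, hc'0⟩, hLc'⟩
    · rintro ⟨s, -, c, ⟨-, hc⟩, rfl⟩
      exact ⟨c, hc, rfl⟩
  rw [hunion]
  refine (Set.toFinite _).isClosed_biUnion fun s hs => ?_
  have hemb : Topology.IsClosedEmbedding (L.domRestrict (supportedOn s)) :=
    LinearMap.isClosedEmbedding_of_injective
      (LinearMap.ker_eq_bot.mpr (Set.injOn_iff_injective.mp hs))
  have : L '' (supportedOn s ∩ {c | 0 ≤ c}) =
      L.domRestrict (supportedOn s) '' (Subtype.val ⁻¹' {c | 0 ≤ c}) := by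
    ext x
    constructor
    · rintro ⟨c, ⟨hcs, hc⟩, rfl⟩
      exact ⟨⟨c, hcs⟩, hc, rfl⟩
    · rintro ⟨⟨c, hcs⟩, hc, rfl⟩
      exact ⟨c, ⟨hcs, hc⟩, rfl⟩
  rw [this]
  exact hemb.isClosedMap _
    ((isClosed_le continuous_const continuous_id).preimage continuous_subtype_val)

end NonnegCone

theorem exists_nonneg_mulVec_le_or_exists_nonneg_vecMul_nonneg {ι κ : Type*} [Fintype ι]
    [Fintype κ] (M : Matrix ι κ ℝ) (d : ι → ℝ) :
    (∃ u, 0 ≤ u ∧ M *ᵥ u ≤ d) ∨ ∃ w, 0 ≤ w ∧ 0 ≤ w ᵥ* M ∧ d ⬝ᵥ w < 0 := by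
  classical
  refine or_iff_not_imp_left.mpr fun h => ?_
  let L : (κ ⊕ ι → ℝ) →ₗ[ℝ] (ι → ℝ) :=
    M.mulVecLin ∘ₗ LinearMap.funLeft ℝ ℝ Sum.inl + LinearMap.funLeft ℝ ℝ Sum.inr
  let K : ProperCone ℝ (ι → ℝ) :=
    ⟨(PointedCone.positive ℝ _).map L, isClosed_image_nonneg L⟩
  have hK : ∀ u s, 0 ≤ u → 0 ≤ s → M *ᵥ u + s ∈ K := fun u s hu hs =>
    ⟨Sum.elim u s, Pi.le_def.mpr (Sum.forall.mpr ⟨hu, hs⟩), rfl⟩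
  have hdK : d ∉ K := by
    rintro ⟨c, hc, hcd⟩
    refine h ⟨c ∘ Sum.inl, fun j => hc _, ?_⟩
    rw [← hcd]
    exact le_add_of_nonneg_right fun i => hc _
  obtain ⟨f, hf, hfd⟩ := K.hyperplane_separation_point hdK
  set w : ι → ℝ := fun i => f (Pi.single i 1)
  have hfw : ∀ x, f x = x ⬝ᵥ w := by
    intro x
    conv_lhs => rw [← Finset.univ_sum_single x]
    refine (map_sum f _ _).trans (Finset.sum_congr rfl fun i _ => ?_)
    rw [show Pi.single i (x i) = x i • Pi.single i (1 : ℝ) by rw [← Pi.single_smul', smul_eq_mul,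
      mul_one], map_smul, smul_eq_mul]
  refine ⟨w, fun i => ?_, fun j => ?_, by rwa [← hfw]⟩
  · simpa using hf _ (hK 0 (Pi.single i 1) le_rfl (Pi.single_nonneg.mpr zero_le_one))
  · have := hf _ (hK (Pi.single j 1) 0 (Pi.single_nonneg.mpr zero_le_one) le_rfl)
    rwa [add_zero, hfw, dotProduct_comm, dotProduct_mulVec, dotProduct_single_one] at this

theorem eq_zero_of_isBounded_of_add_smul_mem {E : Type*} [NormedAddCommGroup E] [NormedSpace ℝ E]
    {s : Set E} (hs : Bornology.IsBounded s) {p v : E} (h : ∀ t : ℝ, 0 ≤ t → p + t • v ∈ s) :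
    v = 0 := by
  by_contra hv
  obtain ⟨R, hR⟩ := hs.exists_norm_le
  have hp : ‖p‖ ≤ R := by simpa using hR _ (h 0 le_rfl)
  have ht : 0 ≤ (2 * R + 1) / ‖v‖ := div_nonneg (by linarith [norm_nonneg p]) (norm_nonneg v)
  have := calc ‖((2 * R + 1) / ‖v‖) • v‖
      = ‖(p + ((2 * R + 1) / ‖v‖) • v) - p‖ := by rw [add_sub_cancel_left]
    _ ≤ ‖p + ((2 * R + 1) / ‖v‖) • v‖ + ‖p‖ := norm_sub_le _ _
    _ ≤ 2 * R := by linarith [hR _ (h _ ht)]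
  rw [norm_smul, Real.norm_of_nonneg ht, div_mul_cancel₀ _ (norm_ne_zero_iff.mpr hv)] at this
  linarith

section LinearProgram

variable {ι κ : Type*} [Fintype ι] [Fintype κ]

def primalFeasibleSet (A : Matrix κ ι ℝ) (a : κ → ℝ) : Set (ι → ℝ) := {x | A *ᵥ x ≤ a ∧ 0 ≤ x}

def dualFeasibleSet (A : Matrix κ ι ℝ) (c : ι → ℝ) : Set (κ → ℝ) := {u | 0 ≤ u ∧ -(Aᵀ *ᵥ u) ≤ c}

variable {A : Matrix κ ι ℝ} {a : κ → ℝ} {c : ι → ℝ}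

theorem neg_dotProduct_le_dotProduct {x : ι → ℝ} {u : κ → ℝ} (hx : x ∈ primalFeasibleSet A a)
    (hu : u ∈ dualFeasibleSet A c) : -(a ⬝ᵥ u) ≤ c ⬝ᵥ x :=
  calc -(a ⬝ᵥ u)
    _ ≤ -(A *ᵥ x ⬝ᵥ u) := neg_le_neg (dotProduct_le_dotProduct_of_nonneg_right hx.1 hu.1)
    _ = -(Aᵀ *ᵥ u) ⬝ᵥ x := by
      rw [neg_dotProduct, mulVec_transpose, ← dotProduct_mulVec, dotProduct_comm]
    _ ≤ c ⬝ᵥ x := dotProduct_le_dotProduct_of_nonneg_right hu.2 hx.2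

omit [Fintype κ] in
theorem isCompact_primalFeasibleSet (hbd : Bornology.IsBounded (primalFeasibleSet A a)) :
    IsCompact (primalFeasibleSet A a) :=
  Metric.isCompact_of_isClosed_isBounded
    ((isClosed_le A.mulVecLin.continuous_of_finiteDimensional continuous_const).inter
      (isClosed_le continuous_const continuous_id)) hbd

theorem exists_dualFeasibleSet_le_of_isMinOn {xs : ι → ℝ}
    (hbd : Bornology.IsBounded (primalFeasibleSet A a)) (hxs : xs ∈ primalFeasibleSet A a)
    (hmin : IsMinOn (c ⬝ᵥ ·) (primalFeasibleSet A a) xs) :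
    ∃ u ∈ dualFeasibleSet A c, c ⬝ᵥ xs ≤ -(a ⬝ᵥ u) := by
  -- A Farkas certificate `(x, μ)` against `u ≥ 0, -Aᵀu ≤ c, a·u ≤ -c·xs` gives either a cheaper
  -- feasible point `μ⁻¹ • x` (if `μ > 0`) or a recession direction `x` of the polyhedron.
  rcases exists_nonneg_mulVec_le_or_exists_nonneg_vecMul_nonneg
    ((-Aᵀ).fromRows (replicateRow Unit a)) (Sum.elim c fun _ => -(c ⬝ᵥ xs)) with
    ⟨u, hu, hMu⟩ | ⟨w, hw, hwM, hdw⟩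
  · rw [fromRows_mulVec, Sum.elim_le_elim_iff, neg_mulVec] at hMu
    have hau : a ⬝ᵥ u ≤ -(c ⬝ᵥ xs) := hMu.2 ()
    exact ⟨u, ⟨hu, hMu.1⟩, by linarith⟩
  exfalso
  obtain ⟨x, μ, rfl⟩ : ∃ x μ, w = Sum.elim x fun _ : Unit => μ :=
    ⟨w ∘ Sum.inl, w (Sum.inr ()), by ext (i | ⟨⟩) <;> rfl⟩
  have hx : 0 ≤ x := fun i => hw (Sum.inl i)
  have hμ : 0 ≤ μ := hw (Sum.inr ())
  have hAx : A *ᵥ x ≤ μ • a := fun k => by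
    simpa [vecMul, mulVec, dotProduct, mul_comm] using hwM k
  have hcx : c ⬝ᵥ x < μ * (c ⬝ᵥ xs) := by
    rw [sumElim_dotProduct_sumElim] at hdw
    simp only [dotProduct, Finset.univ_unique, Finset.sum_singleton] at hdw ⊢
    linarith
  rcases hμ.eq_or_lt with hμ0 | hμpos
  · have hray : ∀ t : ℝ, 0 ≤ t → xs + t • x ∈ primalFeasibleSet A a := fun t ht => by
      refine ⟨?_, add_nonneg hxs.2 (smul_nonneg ht hx)⟩
      rw [mulVec_add, mulVec_smul]
      exact add_le_of_le_of_nonpos hxs.1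
        (smul_nonpos_of_nonneg_of_nonpos ht (hAx.trans_eq (by rw [← hμ0, zero_smul])))
    have := eq_zero_of_isBounded_of_add_smul_mem hbd hray
    simp [this, ← hμ0] at hcx
  · have hx' : μ⁻¹ • x ∈ primalFeasibleSet A a := by
      refine ⟨?_, smul_nonneg (inv_nonneg.mpr hμ) hx⟩
      rw [mulVec_smul, ← inv_smul_smul₀ hμpos.ne' a]
      exact smul_le_smul_of_nonneg_left hAx (inv_nonneg.mpr hμ)
    have : c ⬝ᵥ xs ≤ c ⬝ᵥ (μ⁻¹ • x) := hmin hx'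
    rw [dotProduct_smul, smul_eq_mul] at this
    exact this.not_gt ((inv_mul_lt_iff₀ hμpos).mpr hcx)

theorem exists_isLeast_isGreatest_dual (hne : (primalFeasibleSet A a).Nonempty)
    (hbd : Bornology.IsBounded (primalFeasibleSet A a)) :
    ∃ v, IsLeast ((c ⬝ᵥ ·) '' primalFeasibleSet A a) v ∧
      IsGreatest ((fun u => -(a ⬝ᵥ u)) '' dualFeasibleSet A c) v := by
  obtain ⟨xs, hxs, hmin⟩ := (isCompact_primalFeasibleSet hbd).exists_isMinOn hne
    (continuous_const.dotProduct continuous_id).continuousOn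
  obtain ⟨u, hu, hle⟩ := exists_dualFeasibleSet_le_of_isMinOn hbd hxs hmin
  refine ⟨c ⬝ᵥ xs, ⟨⟨xs, hxs, rfl⟩, Set.forall_mem_image.2 fun x hx => hmin hx⟩,
    ⟨⟨u, hu, le_antisymm (neg_dotProduct_le_dotProduct hxs hu) hle⟩, ?_⟩⟩
  exact Set.forall_mem_image.2 fun u' hu' => neg_dotProduct_le_dotProduct hxs hu'

theorem exists_isLeast_image_bilinear_isGreatest_dual {ν : Type*} [Fintype ν] (C : Matrix ι ν ℝ)
    (g : ι → ℝ) (e y : ν → ℝ) (hne : (primalFeasibleSet A a).Nonempty)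
    (hbd : Bornology.IsBounded (primalFeasibleSet A a)) :
    ∃ v, IsLeast ((fun x => x ⬝ᵥ C *ᵥ y + g ⬝ᵥ x + e ⬝ᵥ y) '' primalFeasibleSet A a) v ∧
      IsGreatest ((fun u => e ⬝ᵥ y - a ⬝ᵥ u) '' dualFeasibleSet A (C *ᵥ y + g)) v := by
  obtain ⟨v, hmin, hmax⟩ := exists_isLeast_isGreatest_dual (c := C *ᵥ y + g) hne hbd
  have hprimal : (fun x => x ⬝ᵥ C *ᵥ y + g ⬝ᵥ x + e ⬝ᵥ y) = (· + e ⬝ᵥ y) ∘ ((C *ᵥ y + g) ⬝ᵥ ·) :=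
    funext fun x => by simp [add_dotProduct, dotProduct_comm x]
  have hdual : (fun u => e ⬝ᵥ y - a ⬝ᵥ u) = (· + e ⬝ᵥ y) ∘ fun u => -(a ⬝ᵥ u) :=
    funext fun u => by simp [sub_eq_neg_add]
  refine ⟨v + e ⬝ᵥ y, ?_, ?_⟩
  · rw [hprimal, Set.image_comp]
    exact (monotone_id.add_const _).map_isLeast hmin
  · rw [hdual, Set.image_comp]
    exact (monotone_id.add_const _).map_isGreatest hmax

end LinearProgram

section IteratedMinimum

variable {α β γ : Type*} [Preorder γ] {f : α → β → γ} {X : Set α} {Y : Set β}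

theorem isLeast_image_of_isLeast_image2 {x : α} {y : β} (h : IsLeast (Set.image2 f X Y) (f x y))
    (hx : x ∈ X) (hy : y ∈ Y) : IsLeast ((f · y) '' X) (f x y) :=
  ⟨Set.mem_image_of_mem _ hx,
    Set.forall_mem_image.2 fun _ hx' => h.2 (Set.mem_image2_of_mem hx' hy)⟩

theorem isLeast_image2_iff (hrow : ∀ y ∈ Y, ∃ v, IsLeast ((f · y) '' X) v) {w : γ} :
    IsLeast (Set.image2 f X Y) w ↔ IsLeast {v | ∃ y ∈ Y, IsLeast ((f · y) '' X) v} w := by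
  constructor
  · intro h
    obtain ⟨x, hx, y, hy, rfl⟩ := h.1
    refine ⟨⟨y, hy, isLeast_image_of_isLeast_image2 h hx hy⟩, ?_⟩
    rintro _ ⟨y', hy', ⟨x', hx', rfl⟩, -⟩
    exact h.2 (Set.mem_image2_of_mem hx' hy')
  · rintro ⟨⟨y, hy, ⟨x, hx, rfl⟩, -⟩, hlow⟩
    refine ⟨Set.mem_image2_of_mem hx hy, ?_⟩
    rintro _ ⟨x', hx', y', hy', rfl⟩
    obtain ⟨v, hv⟩ := hrow y' hy'
    exact (hlow ⟨y', hy', hv⟩).trans (hv.2 (Set.mem_image_of_mem _ hx'))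

end IteratedMinimum

theorem stmt_0_general
    (n m q : ℕ)
    (C : Matrix (Fin n) (Fin m) ℝ) (A : Matrix (Fin q) (Fin n) ℝ)
    (a : Fin q → ℝ) (g : Fin n → ℝ) (e : Fin m → ℝ)
    (z : (Fin n → ℝ) → (Fin m → ℝ) → ℝ)
    (hz : ∀ x y, z x y = x ⬝ᵥ C.mulVec y + g ⬝ᵥ x + e ⬝ᵥ y)
    (X : Set (Fin n → ℝ)) (Y : Set (Fin m → ℝ))
    (hX : X = {x | A.mulVec x ≤ a ∧ 0 ≤ x})
    (hXne : X.Nonempty)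
    (hXbd : Bornology.IsBounded X)
    (U : (Fin m → ℝ) → Set (Fin q → ℝ))
    (hU : ∀ y, U y = {u | 0 ≤ u ∧ -(Aᵀ.mulVec u) ≤ C.mulVec y + g}) :
    (∀ xs ∈ X, ∀ ys ∈ Y, IsLeast (Set.image2 z X Y) (z xs ys) →
      IsLeast {v : ℝ | ∃ y ∈ Y, IsGreatest ((fun u => e ⬝ᵥ y - a ⬝ᵥ u) '' U y) v} (z xs ys) ∧
      IsGreatest ((fun u => e ⬝ᵥ ys - a ⬝ᵥ u) '' U ys) (z xs ys)) ∧
    (∀ zstar : ℝ, ∀ ys ∈ Y,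
      IsLeast {v : ℝ | ∃ y ∈ Y, IsGreatest ((fun u => e ⬝ᵥ y - a ⬝ᵥ u) '' U y) v} zstar →
      IsGreatest ((fun u => e ⬝ᵥ ys - a ⬝ᵥ u) '' U ys) zstar →
      IsLeast (Set.image2 z X Y) zstar ∧ ∃ xs ∈ X, z xs ys = zstar) := by
  subst hX
  obtain rfl : U = fun y => dualFeasibleSet A (C *ᵥ y + g) := funext hU
  have hrow : ∀ y, ∃ v, IsLeast ((z · y) '' primalFeasibleSet A a) v ∧
      IsGreatest ((fun u => e ⬝ᵥ y - a ⬝ᵥ u) '' dualFeasibleSet A (C *ᵥ y + g)) v := by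
    simpa only [hz] using fun y => exists_isLeast_image_bilinear_isGreatest_dual C g e y hXne hXbd
  have hdual_iff : ∀ y v,
      IsGreatest ((fun u => e ⬝ᵥ y - a ⬝ᵥ u) '' dualFeasibleSet A (C *ᵥ y + g)) v ↔
        IsLeast ((z · y) '' primalFeasibleSet A a) v := fun y v => by
    obtain ⟨w, hw, hw'⟩ := hrow y
    exact ⟨fun hv => hw'.unique hv ▸ hw, fun hv => hw.unique hv ▸ hw'⟩
  have hmin_iff := fun w : ℝ => isLeast_image2_iff (w := w) (Y := Y) fun y _ =>
    (hrow y).imp fun _ => And.left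
  simp only [hdual_iff]
  exact ⟨fun xs hxs ys hys h => ⟨(hmin_iff _).1 h, isLeast_image_of_isLeast_image2 h hxs hys⟩,
    fun zstar ys _ h hys => ⟨(hmin_iff _).2 h, hys.1⟩⟩

/-- Equivalence between the disjoint bilinear programming problem and the
min-max linear problem with interdependent variables (Theorem 1 of the paper). -/
theorem stmt_0
    (n m q l : ℕ) (hn : 0 < n) (hm : 0 < m) (hq : 0 < q) (hl : 0 < l)
    (C : Matrix (Fin n) (Fin m) ℝ) (A : Matrix (Fin q) (Fin n) ℝ)
    (B : Matrix (Fin l) (Fin m) ℝ)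
    (a : Fin q → ℝ) (b : Fin l → ℝ) (g : Fin n → ℝ) (e : Fin m → ℝ)
    (z : (Fin n → ℝ) → (Fin m → ℝ) → ℝ)
    (hz : ∀ x y, z x y = x ⬝ᵥ C.mulVec y + g ⬝ᵥ x + e ⬝ᵥ y)
    (X : Set (Fin n → ℝ)) (Y : Set (Fin m → ℝ))
    (hX : X = {x | A.mulVec x ≤ a ∧ 0 ≤ x})
    (hY : Y = {y | B.mulVec y ≤ b ∧ 0 ≤ y})
    (hXne : X.Nonempty) (hYne : Y.Nonempty)
    (hXbd : Bornology.IsBounded X) (hYbd : Bornology.IsBounded Y)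
    (U : (Fin m → ℝ) → Set (Fin q → ℝ))
    (hU : ∀ y, U y = {u | 0 ≤ u ∧ -(Aᵀ.mulVec u) ≤ C.mulVec y + g}) :
    (∀ xs ∈ X, ∀ ys ∈ Y, IsLeast (Set.image2 z X Y) (z xs ys) →
      IsLeast {v : ℝ | ∃ y ∈ Y, IsGreatest ((fun u => e ⬝ᵥ y - a ⬝ᵥ u) '' U y) v} (z xs ys) ∧
      IsGreatest ((fun u => e ⬝ᵥ ys - a ⬝ᵥ u) '' U ys) (z xs ys)) ∧
    (∀ zstar : ℝ, ∀ ys ∈ Y,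
      IsLeast {v : ℝ | ∃ y ∈ Y, IsGreatest ((fun u => e ⬝ᵥ y - a ⬝ᵥ u) '' U y) v} zstar →
      IsGreatest ((fun u => e ⬝ᵥ ys - a ⬝ᵥ u) '' U ys) zstar →
      IsLeast (Set.image2 z X Y) zstar ∧ ∃ xs ∈ X, z xs ys = zstar) :=
  stmt_0_general n m q C A a g e z hz X Y hX hXne hXbd U hU
end

section
/- Assume X and Y are nonempty and bounded. For x ∈ ℝ^n let V(x) = {v ∈ ℝ^l : v ≥ 0, −Bᵀv ≤ Cᵀx + e}. If (x*, y*) ∈ X × Y minimizes z over X × Y with optimal value z*, then z* = min_{x ∈ X} max_{v ∈ V(x)} (g·x − b·v) and z* = max_{v ∈ V(x*)} (g·x* − b·v). -/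
/-!
For fixed `x`, `z x` is the affine function `y ↦ g ⬝ᵥ x + (Cᵀ x + e) ⬝ᵥ y`, and `V x` is the
feasible region of the linear-programming dual of minimising it over `Y`. Since `Y` is compact,
that minimum is attained, and LP duality (Farkas' lemma; the separation argument behind it needs
finitely generated cones to be closed, which follows from a conic Carathéodory reduction to
linearly independent generators) identifies it with `max_{v ∈ V x} (g ⬝ᵥ x - b ⬝ᵥ v)`.
Minimising over `x ∈ X` then gives both claims.
-/

open Matrix

section

variable {ι E : Type*} [AddCommGroup E] [Module ℝ E]

theorem exists_linearIndepOn_nonneg_sum_eq [DecidableEq ι] (v : ι → E) (s : Finset ι)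
    (c : ι → ℝ) (hc : ∀ i ∈ s, 0 ≤ c i) :
    ∃ t ⊆ s, LinearIndepOn ℝ v t ∧
      ∃ c' : t → ℝ, 0 ≤ c' ∧ ∑ i, c' i • v i = ∑ i ∈ s, c i • v i := by
  induction s using Finset.strongInduction generalizing c with
  | H s ih =>
  by_cases hli : LinearIndepOn ℝ v s
  · exact ⟨s, subset_rfl, hli, fun i => c i, fun i => hc i i.2,
      Finset.sum_coe_sort s fun i => c i • v i⟩
  obtain ⟨d, hd, hdpos⟩ : ∃ d : ι → ℝ, ∑ i ∈ s, d i • v i = 0 ∧ ∃ i ∈ s, 0 < d i := by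
    obtain ⟨d, hd, i, hi, hdi⟩ := not_linearIndepOn_finset_iff.mp hli
    rcases hdi.lt_or_gt with hneg | hpos
    · exact ⟨-d, by simp [hd], i, hi, by simpa using hneg⟩
    · exact ⟨d, hd, i, hi, hpos⟩
  -- Move from `c` along `-d` until the first coefficient vanishes; the others stay nonnegative.
  obtain ⟨i₀, hi₀, hmin⟩ := (s.filter (0 < d ·)).exists_min_image (fun j => c j / d j)
    (by simpa [Finset.filter_nonempty_iff] using hdpos)
  rw [Finset.mem_filter] at hi₀
  set τ := c i₀ / d i₀
  have hnonneg : ∀ j ∈ s, 0 ≤ c j - τ * d j := by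
    intro j hj
    rcases le_or_gt (d j) 0 with hdj | hdj
    · nlinarith [hc j hj, div_nonneg (hc i₀ hi₀.1) hi₀.2.le]
    · have := hmin j (Finset.mem_filter.mpr ⟨hj, hdj⟩)
      rw [le_div_iff₀ hdj] at this
      linarith
  have hzero : c i₀ - τ * d i₀ = 0 := by
    rw [div_mul_cancel₀ _ hi₀.2.ne', sub_self]
  obtain ⟨t, hts, htli, c', hc', hsum⟩ := ih (s.erase i₀) (Finset.erase_ssubset hi₀.1)
    (fun j => c j - τ * d j) (fun j hj => hnonneg j (Finset.mem_of_mem_erase hj))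
  refine ⟨t, hts.trans (Finset.erase_subset _ _), htli, c', hc', ?_⟩
  calc ∑ i, c' i • v i = ∑ j ∈ s.erase i₀, (c j - τ * d j) • v j := hsum
    _ = ∑ j ∈ s, (c j - τ * d j) • v j := Finset.sum_erase _ (by rw [hzero, zero_smul])
    _ = ∑ j ∈ s, c j • v j := by
      simp only [sub_smul, Finset.sum_sub_distrib, mul_smul, ← Finset.smul_sum, hd, smul_zero,
        sub_zero]

variable [Fintype ι] [TopologicalSpace E] [IsTopologicalAddGroup E] [ContinuousSMul ℝ E]
  [T2Space E]

theorem isClosed_image_linearCombination_Ici (v : ι → E) :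
    IsClosed (Fintype.linearCombination ℝ v '' Set.Ici 0) := by
  classical
  have hunion : Fintype.linearCombination ℝ v '' Set.Ici 0 =
      ⋃ t : {t : Finset ι // LinearIndepOn ℝ v t},
        Fintype.linearCombination ℝ (fun i : t.1 => v i) '' Set.Ici 0 := by
    ext x
    simp only [Set.mem_image, Set.mem_iUnion, Fintype.linearCombination_apply, Set.mem_Ici]
    constructor
    · rintro ⟨c, hc, rfl⟩
      obtain ⟨t, -, ht, c', hc', hsum⟩ :=
        exists_linearIndepOn_nonneg_sum_eq v Finset.univ c fun i _ => hc i
      exact ⟨⟨t, ht⟩, c', hc', hsum⟩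
    · rintro ⟨⟨t, _⟩, d, hd, rfl⟩
      refine ⟨Subtype.val.extend d 0, Function.extend_nonneg hd le_rfl, ?_⟩
      rw [← Finset.sum_subset (Finset.subset_univ t) fun i _ hi => by
        rw [Function.extend_apply' _ _ _ (by simpa using hi), Pi.zero_apply, zero_smul],
        ← Finset.sum_coe_sort t]
      simp
  rw [hunion]
  refine isClosed_iUnion_of_finite fun t => ?_
  have hinj := linearIndependent_iff_injective_fintypeLinearCombination.mp t.2
  exact (LinearMap.isClosedEmbedding_of_injective (LinearMap.ker_eq_bot.mpr hinj)).isClosedMap _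
    isClosed_Ici

variable [LocallyConvexSpace ℝ E]

theorem exists_nonneg_sum_eq_of_forall_dual (v : ι → E) (x : E)
    (h : ∀ f : StrongDual ℝ E, (∀ i, 0 ≤ f (v i)) → 0 ≤ f x) :
    ∃ c : ι → ℝ, 0 ≤ c ∧ ∑ i, c i • v i = x := by
  classical
  by_contra hx
  have hxK : x ∉ Fintype.linearCombination ℝ v '' Set.Ici 0 := by
    simpa [Fintype.linearCombination_apply] using hx
  obtain ⟨f, u, hfK, hfx⟩ := geometric_hahn_banach_closed_point
    ((convex_Ici 0).linear_image _) (isClosed_image_linearCombination_Ici v) hxK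
  have hu : 0 < u := by simpa using hfK 0 ⟨0, Set.self_mem_Ici, map_zero _⟩
  -- The cone is invariant under scaling, so `f < u` on it forces `f ≤ 0` on every generator.
  have hfv : ∀ i, f (v i) ≤ 0 := by
    intro i
    by_contra! hpos
    have := hfK ((u / f (v i)) • v i)
      ⟨Pi.single i (u / f (v i)), Pi.single_nonneg.mpr (div_pos hu hpos).le,
        Fintype.linearCombination_apply_single ℝ v i _⟩
    rw [map_smul, smul_eq_mul, div_mul_cancel₀ _ hpos.ne'] at this
    exact lt_irrefl _ this
  have := h (-f) fun i => by simpa using hfv i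
  simp only [_root_.neg_apply, neg_nonneg] at this
  linarith

end

theorem StrongDual.apply_eq_dotProduct {κ : Type*} [Fintype κ] [DecidableEq κ]
    (f : StrongDual ℝ (κ → ℝ)) (w : κ → ℝ) : f w = (fun i => f (Pi.single i 1)) ⬝ᵥ w := by
  conv_lhs => rw [← Finset.univ_sum_single w]
  simp only [map_sum, dotProduct]
  refine Finset.sum_congr rfl fun i _ => ?_
  rw [mul_comm, ← smul_eq_mul, ← map_smul, ← Pi.single_smul, smul_eq_mul, mul_one]

namespace Matrix

variable {κ ρ : Type*} [Fintype ρ]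

theorem isClosed_setOf_mulVec_le_and_nonneg (B : Matrix κ ρ ℝ) (b : κ → ℝ) :
    IsClosed {y | B *ᵥ y ≤ b ∧ 0 ≤ y} :=
  (isClosed_le (continuous_const.matrix_mulVec continuous_id) continuous_const).inter
    (isClosed_le continuous_const continuous_id)

variable {B : Matrix κ ρ ℝ} {b : κ → ℝ} {c ys : ρ → ℝ}

theorem mul_dotProduct_le_of_isMinOn (hys : ys ∈ {y | B *ᵥ y ≤ b ∧ 0 ≤ y})
    (hmin : IsMinOn (c ⬝ᵥ ·) {y | B *ᵥ y ≤ b ∧ 0 ≤ y} ys) {y : ρ → ℝ} {t : ℝ} (hy : 0 ≤ y)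
    (ht : 0 ≤ t) (hBy : B *ᵥ y ≤ t • b) : t * (c ⬝ᵥ ys) ≤ c ⬝ᵥ y := by
  rcases ht.eq_or_lt with rfl | htpos
  · have := isMinOn_iff.mp hmin (ys + y)
      ⟨by simpa [mulVec_add] using add_le_add hys.1 hBy, add_nonneg hys.2 hy⟩
    simp only [dotProduct_add] at this
    linarith
  · have := isMinOn_iff.mp hmin (t⁻¹ • y)
      ⟨by simpa [mulVec_smul, inv_smul_le_iff_of_pos htpos] using hBy,
        smul_nonneg (inv_nonneg.mpr ht) hy⟩
    rw [dotProduct_smul, smul_eq_mul, le_inv_mul_iff₀ htpos] at this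
    exact this

variable [Fintype κ]

theorem exists_nonneg_mulVec_le_of_forall_vecMul_nonneg (M : Matrix κ ρ ℝ) (d : κ → ℝ)
    (h : ∀ u, 0 ≤ u → 0 ≤ u ᵥ* M → 0 ≤ u ⬝ᵥ d) :
    ∃ v, 0 ≤ v ∧ M *ᵥ v ≤ d := by
  classical
  -- Write `d` as a nonnegative combination of the columns of `M` and of slack unit vectors.
  obtain ⟨c, hc, hcd⟩ := exists_nonneg_sum_eq_of_forall_dual
    (Sum.elim (fun p => Mᵀ p) (fun i => Pi.single i 1)) d fun f hf => by
      rw [StrongDual.apply_eq_dotProduct f]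
      refine h _ (fun i => hf (.inr i)) fun p => ?_
      have hp := hf (.inl p)
      rwa [StrongDual.apply_eq_dotProduct f] at hp
  refine ⟨c ∘ Sum.inl, fun p => hc (.inl p), fun i => ?_⟩
  have hcol : ∑ p, c (.inl p) • Mᵀ p = M *ᵥ (c ∘ Sum.inl) := by
    ext i; simp [mulVec, dotProduct, mul_comm]
  have hslack : ∑ i, c (.inr i) • Pi.single i (1 : ℝ) = c ∘ Sum.inr := by
    simp_rw [← Pi.single_smul, smul_eq_mul, mul_one]
    exact Finset.univ_sum_single _
  rw [Fintype.sum_sum_type] at hcd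
  simp only [Sum.elim_inl, Sum.elim_inr, hcol, hslack] at hcd
  rw [← hcd]
  simpa using hc (.inr i)

theorem neg_dotProduct_le_dotProduct {v : κ → ℝ} {y : ρ → ℝ} (hv : 0 ≤ v)
    (hvc : -(Bᵀ *ᵥ v) ≤ c) (hyb : B *ᵥ y ≤ b) (hy : 0 ≤ y) :
    -(b ⬝ᵥ v) ≤ c ⬝ᵥ y :=
  calc -(b ⬝ᵥ v) ≤ -(B *ᵥ y ⬝ᵥ v) := neg_le_neg (dotProduct_le_dotProduct_of_nonneg_right hyb hv)
    _ = -(Bᵀ *ᵥ v) ⬝ᵥ y := by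
      rw [neg_dotProduct, mulVec_transpose, ← dotProduct_mulVec, dotProduct_comm]
    _ ≤ c ⬝ᵥ y := dotProduct_le_dotProduct_of_nonneg_right hvc hy

theorem exists_dual_le_of_isMinOn (hys : ys ∈ {y | B *ᵥ y ≤ b ∧ 0 ≤ y})
    (hmin : IsMinOn (c ⬝ᵥ ·) {y | B *ᵥ y ≤ b ∧ 0 ≤ y} ys) :
    ∃ v, 0 ≤ v ∧ -(Bᵀ *ᵥ v) ≤ c ∧ c ⬝ᵥ ys ≤ -(b ⬝ᵥ v) := by
  obtain ⟨v, hv, hMv⟩ := exists_nonneg_mulVec_le_of_forall_vecMul_nonneg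
    (fromRows (-Bᵀ) (replicateRow Unit b)) (Sum.elim c fun _ => -(c ⬝ᵥ ys)) fun u hu huM => by
      have := mul_dotProduct_le_of_isMinOn hys hmin (y := u ∘ Sum.inl) (t := u (.inr ()))
        (fun p => hu _) (hu _) ?_
      · have hsplit : u ⬝ᵥ Sum.elim c (fun _ => -(c ⬝ᵥ ys)) =
            c ⬝ᵥ (u ∘ Sum.inl) - u (.inr ()) * (c ⬝ᵥ ys) := by
          simp [dotProduct, Fintype.sum_sum_type, mul_comm, sub_eq_add_neg]
        linarith
      · intro i
        simpa [vecMul_fromRows, vecMul_neg, vecMul_transpose, vecMul, mulVec, dotProduct,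
          mul_comm] using huM i
  rw [fromRows_mulVec, Sum.elim_le_elim_iff] at hMv
  have hb : b ⬝ᵥ v ≤ -(c ⬝ᵥ ys) := hMv.2 ()
  exact ⟨v, hv, by simpa [neg_mulVec] using hMv.1, by linarith⟩

theorem isGreatest_dual_of_isMinOn (hys : ys ∈ {y | B *ᵥ y ≤ b ∧ 0 ≤ y})
    (hmin : IsMinOn (c ⬝ᵥ ·) {y | B *ᵥ y ≤ b ∧ 0 ≤ y} ys) :
    IsGreatest ((fun v => -(b ⬝ᵥ v)) '' {v | 0 ≤ v ∧ -(Bᵀ *ᵥ v) ≤ c}) (c ⬝ᵥ ys) := by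
  obtain ⟨v, hv, hvc, hle⟩ := exists_dual_le_of_isMinOn hys hmin
  refine ⟨⟨v, ⟨hv, hvc⟩, le_antisymm (neg_dotProduct_le_dotProduct hv hvc hys.1 hys.2) hle⟩, ?_⟩
  rintro _ ⟨w, ⟨hw, hwc⟩, rfl⟩
  exact neg_dotProduct_le_dotProduct hw hwc hys.1 hys.2

end Matrix

theorem stmt_1_general
    (n m l : ℕ)
    (C : Matrix (Fin n) (Fin m) ℝ)
    (B : Matrix (Fin l) (Fin m) ℝ)
    (b : Fin l → ℝ) (g : Fin n → ℝ) (e : Fin m → ℝ)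
    (z : (Fin n → ℝ) → (Fin m → ℝ) → ℝ)
    (hz : ∀ x y, z x y = x ⬝ᵥ C.mulVec y + g ⬝ᵥ x + e ⬝ᵥ y)
    (X : Set (Fin n → ℝ)) (Y : Set (Fin m → ℝ))
    (hY : Y = {y | B.mulVec y ≤ b ∧ 0 ≤ y})
    (hYbd : Bornology.IsBounded Y)
    (V : (Fin n → ℝ) → Set (Fin l → ℝ))
    (hV : ∀ x, V x = {v | 0 ≤ v ∧ -(Bᵀ.mulVec v) ≤ Cᵀ.mulVec x + e}) :
    ∀ xs ∈ X, ∀ ys ∈ Y, IsLeast (Set.image2 z X Y) (z xs ys) →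
      IsLeast {w : ℝ | ∃ x ∈ X, IsGreatest ((fun v => g ⬝ᵥ x - b ⬝ᵥ v) '' V x) w} (z xs ys) ∧
      IsGreatest ((fun v => g ⬝ᵥ xs - b ⬝ᵥ v) '' V xs) (z xs ys) := by
  intro xs hxs ys hys hleast
  have hzd : ∀ x y, z x y = g ⬝ᵥ x + (Cᵀ *ᵥ x + e) ⬝ᵥ y := fun x y => by
    rw [hz, add_dotProduct, dotProduct_mulVec, ← mulVec_transpose]
    ring
  have hdual : ∀ x, ∀ y ∈ Y, IsMinOn (z x) Y y →
      IsGreatest ((fun v => g ⬝ᵥ x - b ⬝ᵥ v) '' V x) (z x y) := by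
    intro x y hy hmin
    have hminc : IsMinOn ((Cᵀ *ᵥ x + e) ⬝ᵥ ·) Y y :=
      isMinOn_iff.mpr fun y' hy' => by
        have := isMinOn_iff.mp hmin y' hy'
        rw [hzd, hzd] at this
        linarith
    rw [hV, hzd]
    have := (monotone_id.const_add (g ⬝ᵥ x)).map_isGreatest
      (Matrix.isGreatest_dual_of_isMinOn (hY ▸ hy) (hY ▸ hminc))
    simpa only [Set.image_image, id, ← sub_eq_add_neg] using this
  have hYcpt : IsCompact Y := Metric.isCompact_of_isClosed_isBounded
    (hY ▸ Matrix.isClosed_setOf_mulVec_le_and_nonneg B b) hYbd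
  have hgreatest := hdual xs ys hys
    (isMinOn_iff.mpr fun y hy => hleast.2 (Set.mem_image2_of_mem hxs hy))
  refine ⟨⟨⟨xs, hxs, hgreatest⟩, ?_⟩, hgreatest⟩
  rintro w ⟨x, hx, hw⟩
  have hzx : Continuous (z x) := by
    simp_rw [funext (hzd x)]
    fun_prop
  obtain ⟨y, hy, hmin⟩ := hYcpt.exists_isMinOn ⟨ys, hys⟩ hzx.continuousOn
  rw [hw.unique (hdual x y hy hmin)]
  exact hleast.2 (Set.mem_image2_of_mem hx hy)

/-- The dual min-max linear problem characterization (Theorem 2 of the paper). -/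
theorem stmt_1
    (n m q l : ℕ) (hn : 0 < n) (hm : 0 < m) (hq : 0 < q) (hl : 0 < l)
    (C : Matrix (Fin n) (Fin m) ℝ) (A : Matrix (Fin q) (Fin n) ℝ)
    (B : Matrix (Fin l) (Fin m) ℝ)
    (a : Fin q → ℝ) (b : Fin l → ℝ) (g : Fin n → ℝ) (e : Fin m → ℝ)
    (z : (Fin n → ℝ) → (Fin m → ℝ) → ℝ)
    (hz : ∀ x y, z x y = x ⬝ᵥ C.mulVec y + g ⬝ᵥ x + e ⬝ᵥ y)
    (X : Set (Fin n → ℝ)) (Y : Set (Fin m → ℝ))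
    (hX : X = {x | A.mulVec x ≤ a ∧ 0 ≤ x})
    (hY : Y = {y | B.mulVec y ≤ b ∧ 0 ≤ y})
    (hXne : X.Nonempty) (hYne : Y.Nonempty)
    (hXbd : Bornology.IsBounded X) (hYbd : Bornology.IsBounded Y)
    (V : (Fin n → ℝ) → Set (Fin l → ℝ))
    (hV : ∀ x, V x = {v | 0 ≤ v ∧ -(Bᵀ.mulVec v) ≤ Cᵀ.mulVec x + e}) :
    ∀ xs ∈ X, ∀ ys ∈ Y, IsLeast (Set.image2 z X Y) (z xs ys) →
      IsLeast {w : ℝ | ∃ x ∈ X, IsGreatest ((fun v => g ⬝ᵥ x - b ⬝ᵥ v) '' V x) w} (z xs ys) ∧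
      IsGreatest ((fun v => g ⬝ᵥ xs - b ⬝ᵥ v) '' V xs) (z xs ys) :=
  stmt_1_general n m l C B b g e z hz X Y hY hYbd V hV
end

section
/- Assume all entries of C, A, B and all components of a, b, g, e are integers, and that X and Y are nonempty and bounded. Let H = max{|c_{ij}|, |g_i|, |e_j| : 1 ≤ i ≤ n, 1 ≤ j ≤ m}, L₁ = Σ_{i=1}^{q} Σ_{j=0}^{n} log₂(|a_{ij}|+1) + log₂(n(q+1)) (where a_{i0} denotes the i-th component of a), L₂ = Σ_{i=1}^{l} Σ_{j=0}^{m} log₂(|b_{ij}|+1) + log₂(l(m+1)) (where b_{i0} denotes the i-th component of b), and L = L₁ + L₂ + (qm+q+m)(1 + log₂(H+1)). Then the minimum value z* of z over X × Y is a rational number expressible as a fraction M/N with integers M and N, |N| ≥ 1, such that |M| ≤ 2^L and |N| ≤ 2^L. -/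
/-!
Let `(x₀, y₀)` be optimal. The linear function `z (·, y₀)` attains its minimum over the polytope `X`
at a vertex `x` (Krein–Milman), and then `z (x, ·)` attains its minimum over `Y` at a vertex `y`;
the pair `(x, y)` is still optimal. The constraints tight at a vertex contain a nonsingular square
integer subsystem, so by Cramer's rule and `|det G| ≤ ∏ᵢ ∑ⱼ |Gᵢⱼ|` the vertex has a common
denominator which, like all its numerators, is at most `∏ᵢ (|aᵢ| + 1) ∏ⱼ (|Aᵢⱼ| + 1)`, that is
`2 ^ L₁ / (n (q + 1))`. Clearing both denominators in `z (x, y)` gives the fraction `M / N`.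
-/

open Matrix Set

theorem Finset.one_add_sum_le_prod_one_add {ι R : Type*} [CommSemiring R] [PartialOrder R]
    [IsOrderedRing R] (s : Finset ι) {t : ι → R} (ht : ∀ i ∈ s, 0 ≤ t i) :
    1 + ∑ i ∈ s, t i ≤ ∏ i ∈ s, (1 + t i) := by
  induction s using Finset.cons_induction with
  | empty => simp
  | cons i s hi ih =>
    have hti := ht i (mem_cons_self i s)
    have ih := ih fun j hj => ht j (mem_cons_of_mem hj)
    have hone : 1 ≤ ∏ j ∈ s, (1 + t j) :=
      le_trans (le_add_of_nonneg_right (sum_nonneg fun j hj => ht j (mem_cons_of_mem hj))) ih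
    calc 1 + ∑ j ∈ cons i s hi, t j = (1 + ∑ j ∈ s, t j) + t i * 1 := by
          rw [sum_cons, mul_one, add_comm (t i), add_assoc]
      _ ≤ ∏ j ∈ s, (1 + t j) + t i * ∏ j ∈ s, (1 + t j) :=
          add_le_add ih (mul_le_mul_of_nonneg_left hone hti)
      _ = ∏ j ∈ cons i s hi, (1 + t j) := by rw [prod_cons, add_mul, one_mul]

theorem Matrix.abs_det_le_prod_sum_abs {n R : Type*} [Fintype n] [DecidableEq n] [CommRing R]
    [LinearOrder R] [IsStrictOrderedRing R] (G : Matrix n n R) :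
    |G.det| ≤ ∏ i, ∑ j, |G i j| := by
  let toFun : Equiv.Perm n ↪ (n → n) := ⟨fun σ => σ, DFunLike.coe_injective⟩
  rw [← det_transpose, det_apply, Finset.prod_univ_sum]
  calc |∑ σ : Equiv.Perm n, Equiv.Perm.sign σ • ∏ i, Gᵀ (σ i) i|
      ≤ ∑ σ : Equiv.Perm n, ∏ i, |G i (σ i)| := by
        refine (Finset.abs_sum_le_sum_abs _ _).trans (Finset.sum_le_sum fun σ _ => ?_)
        rcases Int.units_eq_one_or (Equiv.Perm.sign σ) with h | h <;>
          simp [h, Finset.abs_prod]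
    _ = ∑ f ∈ Finset.univ.map toFun, ∏ i, |G i (f i)| := by simp [toFun]
    _ ≤ ∑ f ∈ Fintype.piFinset fun _ => Finset.univ, ∏ i, |G i (f i)| :=
        Finset.sum_le_sum_of_subset_of_nonneg (by simp)
          fun _ _ _ => Finset.prod_nonneg fun _ _ => abs_nonneg _

theorem Matrix.sum_abs_updateCol_le {n R : Type*} [Fintype n] [DecidableEq n] [CommRing R]
    [LinearOrder R] [IsOrderedRing R] (G : Matrix n n R) (i : n) (ρ : n → R) (k : n) :
    ∑ j, |G.updateCol i ρ k j| ≤ |ρ k| + ∑ j, |G k j| := by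
  calc ∑ j, |G.updateCol i ρ k j| ≤ ∑ j, (|G k j| + if j = i then |ρ k| else 0) :=
        Finset.sum_le_sum fun j _ => by by_cases h : j = i <;> simp [h]
    _ = |ρ k| + ∑ j, |G k j| := by
        rw [Finset.sum_add_distrib, Finset.sum_ite_eq', if_pos (Finset.mem_univ i), add_comm]

theorem Matrix.det_mem_of_forall_mem {n R : Type*} [Fintype n] [DecidableEq n] [CommRing R]
    (S : Subring R) {G : Matrix n n R} (hG : ∀ i j, G i j ∈ S) : G.det ∈ S := by
  rw [det_apply]
  exact sum_mem fun σ _ => zsmul_mem (prod_mem fun i _ => hG _ _) _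

theorem Matrix.dotProduct_mem {ι R : Type*} [Fintype ι] [CommRing R] (S : Subring R)
    {u v : ι → R} (hu : ∀ i, u i ∈ S) (hv : ∀ i, v i ∈ S) : u ⬝ᵥ v ∈ S :=
  sum_mem fun i _ => mul_mem (hu i) (hv i)

theorem Matrix.abs_dotProduct_le {ι R : Type*} [Fintype ι] [CommRing R] [LinearOrder R]
    [IsOrderedRing R] {u v : ι → R} {α β : R}
    (hu : ∀ i, |u i| ≤ α) (hv : ∀ i, |v i| ≤ β) : |u ⬝ᵥ v| ≤ Fintype.card ι * (α * β) := by
  calc |u ⬝ᵥ v| ≤ ∑ i, |u i| * |v i| := by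
        simpa only [dotProduct, abs_mul] using Finset.abs_sum_le_sum_abs (fun i => u i * v i) _
    _ ≤ ∑ _i : ι, α * β := Finset.sum_le_sum fun i _ =>
        mul_le_mul (hu i) (hv i) (abs_nonneg _) ((abs_nonneg _).trans (hu i))
    _ = Fintype.card ι * (α * β) := by simp

theorem exists_linearIndependent_comp_of_span_eq_top {K κ : Type*} [Field K] {n : ℕ}
    {v : κ → Fin n → K} (hv : Submodule.span K (range v) = ⊤) :
    ∃ σ : Fin n → κ, LinearIndependent K (v ∘ σ) := by
  obtain ⟨τ, a, -, hspan, hli⟩ := exists_linearIndependent' K v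
  let b := Module.Basis.mk hli (by rw [hspan, hv])
  let e := b.indexEquiv (Pi.basisFun K (Fin n))
  exact ⟨a ∘ e.symm, hli.comp e.symm e.symm.injective⟩

theorem IsCompact.exists_mem_extremePoints_isMinOn {E : Type*} [AddCommGroup E] [Module ℝ E]
    [TopologicalSpace E] [T2Space E] [IsTopologicalAddGroup E] [ContinuousSMul ℝ E]
    [LocallyConvexSpace ℝ E] {s : Set E} (hs : IsCompact s) (hne : s.Nonempty)
    (l : E →L[ℝ] ℝ) : ∃ x ∈ s.extremePoints ℝ, IsMinOn l s x := by
  have hB : IsExposed ℝ s {y ∈ s | ∀ z ∈ s, (-l) z ≤ (-l) y} := fun _ => ⟨-l, rfl⟩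
  obtain ⟨z, hzs, hz⟩ := hs.exists_isMinOn hne l.continuous.continuousOn
  obtain ⟨x, hx⟩ := (hB.isCompact hs).extremePoints_nonempty
    ⟨z, hzs, fun y hy => neg_le_neg (hz hy)⟩
  exact ⟨x, hB.isExtreme.extremePoints_subset_extremePoints hx,
    fun y hy => neg_le_neg_iff.mp (hx.1.2 y hy)⟩

/-- `(⊥ : Subring ℝ)` is the image of `ℤ`: `D` and the numerators `D * x i` are integers. -/
def BoundedCommonDenominator {ι : Type*} (K : ℝ) (x : ι → ℝ) : Prop :=
  ∃ D ∈ (⊥ : Subring ℝ), D ≠ 0 ∧ |D| ≤ K ∧ ∀ i, D * x i ∈ (⊥ : Subring ℝ) ∧ |D * x i| ≤ K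

theorem BoundedCommonDenominator.mono {ι : Type*} {K K' : ℝ} {x : ι → ℝ}
    (hx : BoundedCommonDenominator K x) (hK : K ≤ K') : BoundedCommonDenominator K' x := by
  obtain ⟨D, hD, hD0, hDK, hDx⟩ := hx
  exact ⟨D, hD, hD0, hDK.trans hK, fun i => ⟨(hDx i).1, (hDx i).2.trans hK⟩⟩

theorem boundedCommonDenominator_of_det_ne_zero {n : ℕ} {G : Matrix (Fin n) (Fin n) ℝ}
    {x : Fin n → ℝ} (hG : ∀ i j, G i j ∈ (⊥ : Subring ℝ))
    (hGx : ∀ i, (G *ᵥ x) i ∈ (⊥ : Subring ℝ)) (hdet : G.det ≠ 0) :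
    BoundedCommonDenominator (∏ k, (|(G *ᵥ x) k| + ∑ j, |G k j|)) x := by
  have hcramer : G.cramer (G *ᵥ x) = G.det • x := by
    rw [cramer_eq_adjugate_mulVec, mulVec_mulVec, adjugate_mul, smul_mulVec, one_mulVec]
  refine ⟨G.det, det_mem_of_forall_mem _ hG, hdet, ?_, fun i => ?_⟩
  · exact (abs_det_le_prod_sum_abs G).trans (Finset.prod_le_prod (fun k _ => by positivity)
      fun k _ => le_add_of_nonneg_left (abs_nonneg _))
  · have hDx : G.det * x i = (G.updateCol i (G *ᵥ x)).det := by
      rw [← cramer_apply, hcramer, Pi.smul_apply, smul_eq_mul]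
    rw [hDx]
    refine ⟨det_mem_of_forall_mem _ fun k j => ?_, (abs_det_le_prod_sum_abs _).trans
      (Finset.prod_le_prod (fun k _ => by positivity) fun k _ => sum_abs_updateCol_le _ _ _ _)⟩
    by_cases h : j = i <;> simp [h, hG, hGx]

theorem span_tight_rows_eq_top_of_mem_extremePoints {ι : Type*} [Finite ι] {n : ℕ}
    {M : Matrix ι (Fin n) ℝ} {r : ι → ℝ} {x : Fin n → ℝ}
    (hx : x ∈ {x | M *ᵥ x ≤ r}.extremePoints ℝ) :
    Submodule.span ℝ (range fun i : {i // (M *ᵥ x) i = r i} => M i) = ⊤ := by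
  -- Otherwise a direction `d` orthogonal to all tight rows keeps `x ± t • d` feasible for small `t`.
  by_contra hspan
  obtain ⟨f, hf, hfspan⟩ := Submodule.exists_dual_map_eq_bot_of_lt_top
    (lt_top_iff_ne_top.mpr hspan) inferInstance
  set d := (dotProductEquiv ℝ (Fin n)).symm f
  have hfd (v : Fin n → ℝ) : f v = d ⬝ᵥ v :=
    DFunLike.congr_fun ((dotProductEquiv ℝ (Fin n)).apply_symm_apply f).symm v
  have hd : d ≠ 0 := fun hd => hf (LinearMap.ext fun v => by simp [hfd, hd])
  have htight : ∀ i, (M *ᵥ x) i = r i → M i ⬝ᵥ d = 0 := fun i hi => by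
    rw [dotProduct_comm, ← hfd]
    have hmem : M i ∈ Submodule.span ℝ (range fun i : {i // (M *ᵥ x) i = r i} => M i) :=
      Submodule.subset_span ⟨⟨i, hi⟩, rfl⟩
    simpa [hfspan] using Submodule.mem_map_of_mem (f := f) hmem
  have hrow (t : ℝ) (i : ι) : (M *ᵥ (x + t • d)) i = (M *ᵥ x) i + t * (M i ⬝ᵥ d) := by
    rw [mulVec_add, mulVec_smul]
    rfl
  have hmove : ∀ᶠ t in nhds (0 : ℝ), x + t • d ∈ {x | M *ᵥ x ≤ r} := by
    refine Filter.eventually_all.mpr fun i => ?_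
    by_cases hi : (M *ᵥ x) i = r i
    · exact Filter.Eventually.of_forall fun t => by simp [hrow, hi, htight i hi]
    · have hcont : Continuous fun t : ℝ => (M *ᵥ x) i + t * (M i ⬝ᵥ d) := by fun_prop
      refine ((hcont.tendsto' 0 _ (by simp)).eventually_lt_const
        (lt_of_le_of_ne (hx.1 i) hi)).mono fun t ht => ?_
      rw [hrow]
      exact ht.le
  have hmove' := (continuous_neg.tendsto' 0 0 neg_zero).eventually hmove
  obtain ⟨t, ⟨hplus, hminus⟩, ht⟩ := ((hmove.and hmove').filter_mono nhdsWithin_le_nhds).and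
    (self_mem_nhdsWithin (s := {0}ᶜ)) |>.exists
  have hseg : x ∈ openSegment ℝ (x + t • d) (x + (-t) • d) :=
    ⟨1 / 2, 1 / 2, by norm_num, by norm_num, by norm_num, by module⟩
  have hfixed : x + t • d = x := ((mem_extremePoints.mp hx).2 _ hplus _ hminus hseg).1
  exact hd ((smul_eq_zero.mp (add_eq_left.mp hfixed)).resolve_left ht)

theorem boundedCommonDenominator_of_mem_extremePoints {ι : Type*} [Fintype ι] {n : ℕ}
    {M : Matrix ι (Fin n) ℝ} {r : ι → ℝ} (hM : ∀ i j, M i j ∈ (⊥ : Subring ℝ))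
    (hr : ∀ i, r i ∈ (⊥ : Subring ℝ)) {w : ι → ℝ} (hw1 : ∀ i, 1 ≤ w i)
    (hw : ∀ i, |r i| + ∑ j, |M i j| ≤ w i) {x : Fin n → ℝ}
    (hx : x ∈ {x | M *ᵥ x ≤ r}.extremePoints ℝ) :
    BoundedCommonDenominator (∏ i, w i) x := by
  classical
  obtain ⟨σ, hσ⟩ := exists_linearIndependent_comp_of_span_eq_top
    (span_tight_rows_eq_top_of_mem_extremePoints hx)
  set G := M.submatrix (fun k => (σ k).1) id
  have hσinj : Function.Injective fun k => (σ k).1 := fun k k' h => hσ.injective (by simp [h])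
  have hGx : ∀ k, (G *ᵥ x) k = r (σ k) := fun k => (σ k).2
  have hdet : G.det ≠ 0 :=
    ((isUnit_iff_isUnit_det G).mp (linearIndependent_rows_iff_isUnit.mp hσ)).ne_zero
  refine (boundedCommonDenominator_of_det_ne_zero (fun k j => hM _ _) (fun k => hGx k ▸ hr _)
    hdet).mono ?_
  calc ∏ k, (|(G *ᵥ x) k| + ∑ j, |G k j|) ≤ ∏ k, w (σ k) :=
        Finset.prod_le_prod (fun k _ => by positivity) fun k _ => hGx k ▸ hw _
    _ = ∏ i ∈ Finset.univ.image fun k => (σ k).1, w i :=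
        (Finset.prod_image fun k _ k' _ h => hσinj h).symm
    _ ≤ ∏ i, w i := Finset.prod_le_prod_of_subset_of_one_le (Finset.subset_univ _)
        (fun i _ => zero_le_one.trans (hw1 i)) fun i _ _ => hw1 i

theorem exists_isMinOn_boundedCommonDenominator {ι : Type*} [Fintype ι] {n : ℕ}
    {M : Matrix ι (Fin n) ℝ} {r : ι → ℝ} (hM : ∀ i j, M i j ∈ (⊥ : Subring ℝ))
    (hr : ∀ i, r i ∈ (⊥ : Subring ℝ)) {w : ι → ℝ} (hw1 : ∀ i, 1 ≤ w i)
    (hw : ∀ i, |r i| + ∑ j, |M i j| ≤ w i) (hne : {x | M *ᵥ x ≤ r}.Nonempty)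
    (hbd : Bornology.IsBounded {x | M *ᵥ x ≤ r}) (c : Fin n → ℝ) :
    ∃ x ∈ {x | M *ᵥ x ≤ r},
      BoundedCommonDenominator (∏ i, w i) x ∧ IsMinOn (c ⬝ᵥ ·) {x | M *ᵥ x ≤ r} x := by
  have hcompact : IsCompact {x | M *ᵥ x ≤ r} :=
    Metric.isCompact_of_isClosed_isBounded
      (isClosed_le (continuous_const.matrix_mulVec continuous_id) continuous_const) hbd
  obtain ⟨x, hx, hmin⟩ := hcompact.exists_mem_extremePoints_isMinOn hne
    (LinearMap.toContinuousLinearMap (dotProductBilin ℝ ℝ c))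
  exact ⟨x, hx.1, boundedCommonDenominator_of_mem_extremePoints hM hr hw1 hw hx, hmin⟩

def systemHeight {ι κ : Type*} [Fintype ι] [Fintype κ] (A : Matrix ι κ ℝ) (a : ι → ℝ) : ℝ :=
  ∏ i, ((|a i| + 1) * ∏ j, (|A i j| + 1))

theorem abs_add_sum_abs_le_mul_prod {κ : Type*} [Fintype κ] (α : ℝ) (v : κ → ℝ) :
    |α| + ∑ j, |v j| ≤ (|α| + 1) * ∏ j, (|v j| + 1) := by
  have h := Finset.univ.one_add_sum_le_prod_one_add fun j _ => abs_nonneg (v j)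
  simp_rw [add_comm 1 |v _|] at h
  nlinarith [abs_nonneg α, Finset.sum_nonneg fun j (_ : j ∈ Finset.univ) => abs_nonneg (v j)]

theorem setOf_mulVec_le_and_nonneg_eq_fromRows {q n : ℕ} (A : Matrix (Fin q) (Fin n) ℝ)
    (a : Fin q → ℝ) :
    {x | A *ᵥ x ≤ a ∧ 0 ≤ x} =
      {x | fromRows A (-1 : Matrix (Fin n) (Fin n) ℝ) *ᵥ x ≤ Sum.elim a 0} := by
  ext x
  simp [fromRows_mulVec, Pi.le_def, Sum.forall, neg_mulVec]

theorem exists_isMinOn_boundedCommonDenominator_of_standardForm {q n : ℕ}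
    {A : Matrix (Fin q) (Fin n) ℝ} {a : Fin q → ℝ} (hA : ∀ i j, A i j ∈ (⊥ : Subring ℝ))
    (ha : ∀ i, a i ∈ (⊥ : Subring ℝ)) (hne : {x | A *ᵥ x ≤ a ∧ 0 ≤ x}.Nonempty)
    (hbd : Bornology.IsBounded {x | A *ᵥ x ≤ a ∧ 0 ≤ x}) (c : Fin n → ℝ) :
    ∃ x ∈ {x | A *ᵥ x ≤ a ∧ 0 ≤ x},
      BoundedCommonDenominator (systemHeight A a) x ∧
        IsMinOn (c ⬝ᵥ ·) {x | A *ᵥ x ≤ a ∧ 0 ≤ x} x := by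
  rw [setOf_mulVec_le_and_nonneg_eq_fromRows] at hne hbd ⊢
  have hweight : ∏ i, Sum.elim (fun i => (|a i| + 1) * ∏ j, (|A i j| + 1)) (1 : Fin n → ℝ) i =
      systemHeight A a := by
    simp [Fintype.prod_sum_type, systemHeight]
  rw [← hweight]
  refine exists_isMinOn_boundedCommonDenominator ?_ ?_ ?_ ?_ hne hbd c
  · rintro (i | k) j
    · exact hA i j
    · show -((1 : Matrix (Fin n) (Fin n) ℝ) k j) ∈ _
      rw [one_apply]
      split_ifs <;> simp
  · rintro (i | k)
    · exact ha i
    · exact zero_mem _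
  · rintro (i | k)
    · exact one_le_mul_of_one_le_of_one_le (by simp)
        (Finset.one_le_prod fun j _ => by simp)
    · simp
  · rintro (i | k)
    · exact abs_add_sum_abs_le_mul_prod (a i) (A i)
    · simp [Matrix.one_apply, apply_ite]

theorem IsLeast.exists_eq_of_forall_exists_isMinOn {α β γ : Type*} [PartialOrder γ]
    {f : α → β → γ} {s : Set α} {t : Set β} {P : α → Prop} {Q : β → Prop} {c : γ}
    (h : IsLeast (image2 f s t) c)
    (hs : ∀ y ∈ t, ∃ x ∈ s, P x ∧ IsMinOn (f · y) s x)
    (ht : ∀ x ∈ s, ∃ y ∈ t, Q y ∧ IsMinOn (f x) t y) :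
    ∃ x ∈ s, P x ∧ ∃ y ∈ t, Q y ∧ f x y = c := by
  obtain ⟨x₀, hx₀, y₀, hy₀, rfl⟩ := h.1
  obtain ⟨x, hx, hPx, hxmin⟩ := hs y₀ hy₀
  obtain ⟨y, hy, hQy, hymin⟩ := ht x hx
  exact ⟨x, hx, hPx, y, hy, hQy,
    le_antisymm ((hymin hy₀).trans (hxmin hx₀)) (h.2 (mem_image2_of_mem hx hy))⟩

theorem isMinOn_bilinear_of_isMinOn_left {ι κ : Type*} [Fintype ι] [Fintype κ]
    {C : Matrix ι κ ℝ} {g : ι → ℝ} {e : κ → ℝ} {s : Set (ι → ℝ)} {x : ι → ℝ} {y : κ → ℝ}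
    (h : IsMinOn ((C *ᵥ y + g) ⬝ᵥ ·) s x) :
    IsMinOn (fun x => x ⬝ᵥ C *ᵥ y + g ⬝ᵥ x + e ⬝ᵥ y) s x := fun x' hx' => by
  have := h hx'
  simp only [mem_ofPred_eq, add_dotProduct, dotProduct_comm (C *ᵥ y), dotProduct_comm g] at this ⊢
  linarith

theorem isMinOn_bilinear_of_isMinOn_right {ι κ : Type*} [Fintype ι] [Fintype κ]
    {C : Matrix ι κ ℝ} {g : ι → ℝ} {e : κ → ℝ} {t : Set (κ → ℝ)} {x : ι → ℝ} {y : κ → ℝ}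
    (h : IsMinOn ((x ᵥ* C + e) ⬝ᵥ ·) t y) :
    IsMinOn (fun y => x ⬝ᵥ C *ᵥ y + g ⬝ᵥ x + e ⬝ᵥ y) t y := fun y' hy' => by
  have := h hy'
  simp only [mem_ofPred_eq, add_dotProduct, dotProduct_mulVec] at this ⊢
  linarith

theorem exists_int_div_eq_bilinear {n m : ℕ} {C : Matrix (Fin n) (Fin m) ℝ} {g : Fin n → ℝ}
    {e : Fin m → ℝ} (hC : ∀ i j, C i j ∈ (⊥ : Subring ℝ)) (hg : ∀ i, g i ∈ (⊥ : Subring ℝ))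
    (he : ∀ j, e j ∈ (⊥ : Subring ℝ)) {H : ℝ} (hCH : ∀ i j, |C i j| ≤ H)
    (hgH : ∀ i, |g i| ≤ H) (heH : ∀ j, |e j| ≤ H) {K₁ K₂ : ℝ} {x : Fin n → ℝ} {y : Fin m → ℝ}
    (hx : BoundedCommonDenominator K₁ x) (hy : BoundedCommonDenominator K₂ y) :
    ∃ M N : ℤ, N ≠ 0 ∧ (|N| : ℝ) ≤ K₁ * K₂ ∧ (|M| : ℝ) ≤ K₁ * K₂ * (H * (n * m + n + m)) ∧
      x ⬝ᵥ C *ᵥ y + g ⬝ᵥ x + e ⬝ᵥ y = M / N := by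
  obtain ⟨D, hD, hD0, hDK, hDx⟩ := hx
  obtain ⟨E, hE, hE0, hEK, hEy⟩ := hy
  set u := D • x
  set v := E • y
  have hu : ∀ i, u i ∈ (⊥ : Subring ℝ) ∧ |u i| ≤ K₁ := hDx
  have hv : ∀ j, v j ∈ (⊥ : Subring ℝ) ∧ |v j| ≤ K₂ := hEy
  have hK₁ : 0 ≤ K₁ := (abs_nonneg D).trans hDK
  have hK₂ : 0 ≤ K₂ := (abs_nonneg E).trans hEK
  have hCv : ∀ i, |(C *ᵥ v) i| ≤ m * (H * K₂) := fun i => by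
    simpa [mulVec] using abs_dotProduct_le (hCH i) fun j => (hv j).2
  have hvalue : D * E * (x ⬝ᵥ C *ᵥ y + g ⬝ᵥ x + e ⬝ᵥ y) =
      u ⬝ᵥ C *ᵥ v + E * (g ⬝ᵥ u) + D * (e ⬝ᵥ v) := by
    simp only [u, v, mulVec_smul, dotProduct_smul, smul_dotProduct, smul_eq_mul]
    ring
  have hnum : u ⬝ᵥ C *ᵥ v + E * (g ⬝ᵥ u) + D * (e ⬝ᵥ v) ∈ (⊥ : Subring ℝ) :=
    add_mem (add_mem (dotProduct_mem _ (fun i => (hu i).1) fun i => dotProduct_mem _ (hC i)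
      fun j => (hv j).1) (mul_mem hE (dotProduct_mem _ hg fun i => (hu i).1)))
      (mul_mem hD (dotProduct_mem _ he fun j => (hv j).1))
  have hbound : |u ⬝ᵥ C *ᵥ v + E * (g ⬝ᵥ u) + D * (e ⬝ᵥ v)| ≤
      K₁ * K₂ * (H * (n * m + n + m)) := by
    have h₁ : |u ⬝ᵥ C *ᵥ v| ≤ n * (K₁ * (m * (H * K₂))) := by
      simpa using abs_dotProduct_le (fun i => (hu i).2) hCv
    have h₂ : |g ⬝ᵥ u| ≤ n * (H * K₁) := by
      simpa using abs_dotProduct_le hgH fun i => (hu i).2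
    have h₃ : |e ⬝ᵥ v| ≤ m * (H * K₂) := by
      simpa using abs_dotProduct_le heH fun j => (hv j).2
    calc _ ≤ |u ⬝ᵥ C *ᵥ v| + |E| * |g ⬝ᵥ u| + |D| * |e ⬝ᵥ v| := by
          simpa only [abs_mul] using
            abs_add_three (u ⬝ᵥ C *ᵥ v) (E * (g ⬝ᵥ u)) (D * (e ⬝ᵥ v))
      _ ≤ n * (K₁ * (m * (H * K₂))) + K₂ * (n * (H * K₁)) + K₁ * (m * (H * K₂)) := by
          gcongr
      _ = K₁ * K₂ * (H * (n * m + n + m)) := by ring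
  obtain ⟨M, hM⟩ := Subring.mem_bot.mp hnum
  obtain ⟨N, hN⟩ := Subring.mem_bot.mp (mul_mem hD hE)
  refine ⟨M, N, by rintro rfl; simp_all, ?_, ?_, ?_⟩
  · rw [hN, abs_mul]
    exact mul_le_mul hDK hEK (abs_nonneg _) hK₁
  · rwa [hM]
  · rw [hM, hN, eq_div_iff (mul_ne_zero hD0 hE0), mul_comm, hvalue]

theorem two_rpow_sum_logb_eq_systemHeight {ι κ : Type*} [Fintype ι] [Fintype κ]
    (A : Matrix ι κ ℝ) (a : ι → ℝ) :
    (2 : ℝ) ^ (∑ i, (Real.logb 2 (|a i| + 1) + ∑ j, Real.logb 2 (|A i j| + 1))) =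
      systemHeight A a := by
  have h2 (t : ℝ) : (2 : ℝ) ^ Real.logb 2 (|t| + 1) = |t| + 1 :=
    Real.rpow_logb two_pos (by norm_num) (by positivity)
  simp only [systemHeight, Real.rpow_sum_of_pos two_pos, Real.rpow_add two_pos, h2]

theorem max_le_two_rpow_size {n m q l : ℕ} (hn : 0 < n) (hm : 0 < m) (hl : 0 < l) {H : ℝ}
    (hH : 0 ≤ H) :
    max 1 (H * (n * m + n + m)) ≤
      n * (q + 1) * (l * (m + 1)) * (2 : ℝ) ^ ((q * m + q + m) * (1 + Real.logb 2 (H + 1))) := by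
  have hn : (1 : ℝ) ≤ n := by exact_mod_cast hn
  have hm : (1 : ℝ) ≤ m := by exact_mod_cast hm
  have hl : (1 : ℝ) ≤ l := by exact_mod_cast hl
  have hq : (0 : ℝ) ≤ q := q.cast_nonneg
  have hlog : 0 ≤ 1 + Real.logb 2 (H + 1) :=
    add_nonneg zero_le_one (Real.logb_nonneg (by norm_num) (by linarith))
  have hexp : 1 + Real.logb 2 (H + 1) ≤ (q * m + q + m) * (1 + Real.logb 2 (H + 1)) :=
    le_mul_of_one_le_left hlog (by nlinarith)
  have hpow : 2 * (H + 1) ≤ (2 : ℝ) ^ ((q * m + q + m) * (1 + Real.logb 2 (H + 1))) := by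
    calc 2 * (H + 1) = (2 : ℝ) ^ (1 + Real.logb 2 (H + 1)) := by
          rw [Real.rpow_add two_pos, Real.rpow_one,
            Real.rpow_logb two_pos (by norm_num) (by linarith)]
      _ ≤ _ := Real.rpow_le_rpow_of_exponent_le (by norm_num) hexp
  have hql : (1 : ℝ) ≤ (q + 1) * l := by nlinarith
  have hnm : (m : ℝ) ≤ n * m := le_mul_of_one_le_left (by linarith) hn
  calc max 1 (H * (n * m + n + m)) ≤ n * (m + 1) * (2 * (H + 1)) := by
        refine max_le ?_ ?_ <;> nlinarith [mul_le_mul_of_nonneg_left hnm hH]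
    _ ≤ n * (m + 1) * (2 * (H + 1)) * ((q + 1) * l) :=
        le_mul_of_one_le_right (by positivity) hql
    _ = n * (q + 1) * (l * (m + 1)) * (2 * (H + 1)) := by ring
    _ ≤ _ := mul_le_mul_of_nonneg_left hpow (by positivity)

theorem stmt_3_general
    (n m q l : ℕ) (hn : 0 < n) (hm : 0 < m) (hl : 0 < l)
    (C : Matrix (Fin n) (Fin m) ℝ) (A : Matrix (Fin q) (Fin n) ℝ)
    (B : Matrix (Fin l) (Fin m) ℝ)
    (a : Fin q → ℝ) (b : Fin l → ℝ) (g : Fin n → ℝ) (e : Fin m → ℝ)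
    (hCint : ∀ i j, ∃ k : ℤ, C i j = (k : ℝ))
    (hAint : ∀ i j, ∃ k : ℤ, A i j = (k : ℝ))
    (hBint : ∀ i j, ∃ k : ℤ, B i j = (k : ℝ))
    (haint : ∀ i, ∃ k : ℤ, a i = (k : ℝ))
    (hbint : ∀ i, ∃ k : ℤ, b i = (k : ℝ))
    (hgint : ∀ i, ∃ k : ℤ, g i = (k : ℝ))
    (heint : ∀ j, ∃ k : ℤ, e j = (k : ℝ))
    (z : (Fin n → ℝ) → (Fin m → ℝ) → ℝ)
    (hz : ∀ x y, z x y = x ⬝ᵥ C.mulVec y + g ⬝ᵥ x + e ⬝ᵥ y)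
    (X : Set (Fin n → ℝ)) (Y : Set (Fin m → ℝ))
    (hX : X = {x | A.mulVec x ≤ a ∧ 0 ≤ x})
    (hY : Y = {y | B.mulVec y ≤ b ∧ 0 ≤ y})
    (hXne : X.Nonempty) (hYne : Y.Nonempty)
    (hXbd : Bornology.IsBounded X) (hYbd : Bornology.IsBounded Y)
    (H : ℝ)
    (hH : IsGreatest {t : ℝ | (∃ i j, t = |C i j|) ∨ (∃ i, t = |g i|) ∨ (∃ j, t = |e j|)} H)
    (L₁ L₂ L : ℝ)
    (hL₁ : L₁ = (∑ i : Fin q,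
        (Real.logb 2 (|a i| + 1) + ∑ j : Fin n, Real.logb 2 (|A i j| + 1))) +
        Real.logb 2 ((n : ℝ) * ((q : ℝ) + 1)))
    (hL₂ : L₂ = (∑ i : Fin l,
        (Real.logb 2 (|b i| + 1) + ∑ j : Fin m, Real.logb 2 (|B i j| + 1))) +
        Real.logb 2 ((l : ℝ) * ((m : ℝ) + 1)))
    (hL : L = L₁ + L₂ +
        ((q : ℝ) * (m : ℝ) + (q : ℝ) + (m : ℝ)) * (1 + Real.logb 2 (H + 1)))
    (zstar : ℝ) (hzstar : IsLeast (Set.image2 z X Y) zstar) :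
    ∃ M N : ℤ, 1 ≤ |N| ∧ (|M| : ℝ) ≤ (2 : ℝ) ^ L ∧ (|N| : ℝ) ≤ (2 : ℝ) ^ L ∧
      zstar = (M : ℝ) / (N : ℝ) := by
  have hint {t : ℝ} : (∃ k : ℤ, t = k) → t ∈ (⊥ : Subring ℝ) := fun ⟨k, hk⟩ =>
    Subring.mem_bot.mpr ⟨k, hk.symm⟩
  have hCH : ∀ i j, |C i j| ≤ H := fun i j => hH.2 (Or.inl ⟨i, j, rfl⟩)
  have hgH : ∀ i, |g i| ≤ H := fun i => hH.2 (Or.inr (Or.inl ⟨i, rfl⟩))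
  have heH : ∀ j, |e j| ≤ H := fun j => hH.2 (Or.inr (Or.inr ⟨j, rfl⟩))
  obtain rfl : z = fun x y => x ⬝ᵥ C *ᵥ y + g ⬝ᵥ x + e ⬝ᵥ y := funext₂ hz
  subst hX hY
  obtain ⟨x, -, hx, y, -, hy, rfl⟩ := hzstar.exists_eq_of_forall_exists_isMinOn
    (P := BoundedCommonDenominator (systemHeight A a))
    (Q := BoundedCommonDenominator (systemHeight B b))
    (fun y _ => by
      obtain ⟨x, hxX, hx, hmin⟩ := exists_isMinOn_boundedCommonDenominator_of_standardForm
        (fun i j => hint (hAint i j)) (fun i => hint (haint i)) hXne hXbd (C *ᵥ y + g)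
      exact ⟨x, hxX, hx, isMinOn_bilinear_of_isMinOn_left hmin⟩)
    (fun x _ => by
      obtain ⟨y, hyY, hy, hmin⟩ := exists_isMinOn_boundedCommonDenominator_of_standardForm
        (fun i j => hint (hBint i j)) (fun i => hint (hbint i)) hYne hYbd (x ᵥ* C + e)
      exact ⟨y, hyY, hy, isMinOn_bilinear_of_isMinOn_right hmin⟩)
  obtain ⟨M, N, hN0, hN, hM, hvalue⟩ := exists_int_div_eq_bilinear
    (fun i j => hint (hCint i j)) (fun i => hint (hgint i)) (fun j => hint (heint j))
    hCH hgH heH hx hy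
  have h2L : (2 : ℝ) ^ L = systemHeight A a * systemHeight B b *
      (n * (q + 1) * (l * (m + 1)) * (2 : ℝ) ^ ((q * m + q + m) * (1 + Real.logb 2 (H + 1)))) := by
    rw [hL, hL₁, hL₂]
    simp only [Real.rpow_add two_pos, two_rpow_sum_logb_eq_systemHeight]
    rw [Real.rpow_logb two_pos (by norm_num) (by positivity),
      Real.rpow_logb two_pos (by norm_num) (by positivity)]
    ring
  have hsize := max_le_two_rpow_size (q := q) hn hm hl ((abs_nonneg _).trans (hgH ⟨0, hn⟩))
  have hheight : 0 ≤ systemHeight A a * systemHeight B b := by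
    unfold systemHeight
    positivity
  refine ⟨M, N, Int.one_le_abs hN0, ?_, ?_, hvalue⟩
  · rw [h2L]
    exact hM.trans (mul_le_mul_of_nonneg_left ((le_max_right _ _).trans hsize) hheight)
  · rw [h2L]
    exact hN.trans (le_mul_of_one_le_right hheight ((le_max_left _ _).trans hsize))

/-- Rationality and size bound for the optimal value of a disjoint bilinear
programming problem with integer data (Lemma 1 of the paper). -/
theorem stmt_3
    (n m q l : ℕ) (hn : 0 < n) (hm : 0 < m) (hq : 0 < q) (hl : 0 < l)
    (C : Matrix (Fin n) (Fin m) ℝ) (A : Matrix (Fin q) (Fin n) ℝ)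
    (B : Matrix (Fin l) (Fin m) ℝ)
    (a : Fin q → ℝ) (b : Fin l → ℝ) (g : Fin n → ℝ) (e : Fin m → ℝ)
    (hCint : ∀ i j, ∃ k : ℤ, C i j = (k : ℝ))
    (hAint : ∀ i j, ∃ k : ℤ, A i j = (k : ℝ))
    (hBint : ∀ i j, ∃ k : ℤ, B i j = (k : ℝ))
    (haint : ∀ i, ∃ k : ℤ, a i = (k : ℝ))
    (hbint : ∀ i, ∃ k : ℤ, b i = (k : ℝ))
    (hgint : ∀ i, ∃ k : ℤ, g i = (k : ℝ))
    (heint : ∀ j, ∃ k : ℤ, e j = (k : ℝ))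
    (z : (Fin n → ℝ) → (Fin m → ℝ) → ℝ)
    (hz : ∀ x y, z x y = x ⬝ᵥ C.mulVec y + g ⬝ᵥ x + e ⬝ᵥ y)
    (X : Set (Fin n → ℝ)) (Y : Set (Fin m → ℝ))
    (hX : X = {x | A.mulVec x ≤ a ∧ 0 ≤ x})
    (hY : Y = {y | B.mulVec y ≤ b ∧ 0 ≤ y})
    (hXne : X.Nonempty) (hYne : Y.Nonempty)
    (hXbd : Bornology.IsBounded X) (hYbd : Bornology.IsBounded Y)
    (H : ℝ)
    (hH : IsGreatest {t : ℝ | (∃ i j, t = |C i j|) ∨ (∃ i, t = |g i|) ∨ (∃ j, t = |e j|)} H)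
    (L₁ L₂ L : ℝ)
    (hL₁ : L₁ = (∑ i : Fin q,
        (Real.logb 2 (|a i| + 1) + ∑ j : Fin n, Real.logb 2 (|A i j| + 1))) +
        Real.logb 2 ((n : ℝ) * ((q : ℝ) + 1)))
    (hL₂ : L₂ = (∑ i : Fin l,
        (Real.logb 2 (|b i| + 1) + ∑ j : Fin m, Real.logb 2 (|B i j| + 1))) +
        Real.logb 2 ((l : ℝ) * ((m : ℝ) + 1)))
    (hL : L = L₁ + L₂ +
        ((q : ℝ) * (m : ℝ) + (q : ℝ) + (m : ℝ)) * (1 + Real.logb 2 (H + 1)))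
    (zstar : ℝ) (hzstar : IsLeast (Set.image2 z X Y) zstar) :
    ∃ M N : ℤ, 1 ≤ |N| ∧ (|M| : ℝ) ≤ (2 : ℝ) ^ L ∧ (|N| : ℝ) ≤ (2 : ℝ) ^ L ∧
      zstar = (M : ℝ) / (N : ℝ) :=
  stmt_3_general n m q l hn hm hl C A B a b g e hCint hAint hBint haint hbint hgint heint z hz X Y
    hX hY hXne hYne hXbd hYbd H hH L₁ L₂ L hL₁ hL₂ hL zstar hzstar
end

section
/- Assume X and Y are nonempty and bounded, and let h ∈ ℝ. Then the system {A x ≤ a, xᵀC y + g·x + e·y ≤ h, B y ≤ b, x ≥ 0, y ≥ 0} has no solution (x, y) if and only if for every y ∈ Y the system {−Aᵀu ≤ C y + g, a·u < e·y − h, u ≥ 0} has a solution u ∈ ℝ^q. -/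
/-!
For fixed `y` the system is linear in `x`: `A x ≤ a`, `(C y + g)·x ≤ h - e·y`, `x ≥ 0`.
Farkas' lemma applied to this system gives multipliers `u ≥ 0`, `t ≥ 0` with
`Aᵀu + t (C y + g) ≥ 0` and `a·u + t (h - e·y) < 0`. Here `t = 0` is impossible because `X` is
nonempty, so `u / t` solves the dual system; the converse is weak duality.
Farkas' lemma itself comes from separating a point from a finitely generated cone, which is closed
because, by the conic Carathéodory theorem, it is a finite union of cones over linearly independent
families.
-/

open Matrix Finset

def nonnegSpan {ι E : Type*} [AddCommGroup E] [Module ℝ E] (v : ι → E) (t : Finset ι) : Set E :=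
  {x | ∃ w : ι → ℝ, (∀ i ∈ t, 0 ≤ w i) ∧ ∑ i ∈ t, w i • v i = x}

section NonnegSpan

variable {ι E : Type*} [AddCommGroup E] [Module ℝ E] {v : ι → E}

theorem nonnegSpan_mono [DecidableEq ι] {s t : Finset ι} (hst : s ⊆ t) :
    nonnegSpan v s ⊆ nonnegSpan v t := by
  rintro x ⟨w, hw, rfl⟩
  refine ⟨fun i => if i ∈ s then w i else 0, fun i _ => ?_, ?_⟩
  · dsimp only
    split_ifs with hi
    exacts [hw i hi, le_rfl]
  · simp only [ite_smul, zero_smul, sum_ite_mem, inter_eq_right.2 hst]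

-- Move the weights along the relation `c` until the first of them reaches zero.
theorem exists_mem_nonnegSpan_erase [DecidableEq ι] {t : Finset ι} {x : E} (hx : x ∈ nonnegSpan v t)
    {c : ι → ℝ} (hc : ∑ i ∈ t, c i • v i = 0) (hpos : ∃ i ∈ t, 0 < c i) :
    ∃ i₀ ∈ t, x ∈ nonnegSpan v (t.erase i₀) := by
  obtain ⟨w, hw, rfl⟩ := hx
  obtain ⟨i₀, hi₀, hmin⟩ := (t.filter (0 < c ·)).exists_min_image (fun i => w i / c i)
    (let ⟨i, hi, hci⟩ := hpos; ⟨i, mem_filter.2 ⟨hi, hci⟩⟩)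
  obtain ⟨hi₀t, hci₀⟩ := mem_filter.1 hi₀
  set θ := w i₀ / c i₀
  refine ⟨i₀, hi₀t, fun i => w i - θ * c i, fun i hi => ?_, ?_⟩
  · rcases lt_or_ge 0 (c i) with hci | hci
    · have := hmin i (mem_filter.2 ⟨mem_of_mem_erase hi, hci⟩)
      rw [le_div_iff₀ hci] at this
      linarith
    · nlinarith [hw i (mem_of_mem_erase hi), div_nonneg (hw i₀ hi₀t) hci₀.le]
  · rw [sum_erase _ (by simp [θ, div_mul_cancel₀ _ hci₀.ne'])]
    simp only [sub_smul, mul_smul, sum_sub_distrib, ← smul_sum, hc, smul_zero, sub_zero]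

theorem exists_linearIndepOn_of_mem_nonnegSpan {t : Finset ι} {x : E}
    (hx : x ∈ nonnegSpan v t) :
    ∃ s ⊆ t, LinearIndepOn ℝ v (s : Set ι) ∧ x ∈ nonnegSpan v s := by
  classical
  induction t using Finset.strongInduction with
  | H t ih =>
    by_cases hind : LinearIndepOn ℝ v (t : Set ι)
    · exact ⟨t, subset_rfl, hind, hx⟩
    obtain ⟨c, hc, i, hit, hci⟩ : ∃ c : ι → ℝ, ∑ i ∈ t, c i • v i = 0 ∧ ∃ i ∈ t, c i ≠ 0 := by
      simpa [linearIndepOn_finset_iff] using hind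
    obtain ⟨c, hc, hpos⟩ : ∃ c : ι → ℝ, ∑ i ∈ t, c i • v i = 0 ∧ ∃ i ∈ t, 0 < c i := by
      rcases hci.lt_or_gt with hneg | hpos
      · exact ⟨-c, by simp [neg_smul, hc], i, hit, neg_pos.2 hneg⟩
      · exact ⟨c, hc, i, hit, hpos⟩
    obtain ⟨i₀, hi₀, hx'⟩ := exists_mem_nonnegSpan_erase hx hc hpos
    obtain ⟨s, hs, hsind, hxs⟩ := ih _ (erase_ssubset hi₀) hx'
    exact ⟨s, hs.trans (erase_subset _ _), hsind, hxs⟩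

theorem nonnegSpan_eq_image_linearCombination (s : Finset ι) :
    nonnegSpan v s = Fintype.linearCombination ℝ (fun i : s => v i) '' {w | 0 ≤ w} := by
  ext x
  constructor
  · rintro ⟨w, hw, rfl⟩
    exact ⟨fun i => w i, fun i => hw i i.2, by
      rw [Fintype.linearCombination_apply]
      exact sum_coe_sort s fun i => w i • v i⟩
  · rintro ⟨w, hw, rfl⟩
    classical
    refine ⟨fun i => if h : i ∈ s then w ⟨i, h⟩ else 0,
      fun i hi => by simpa [hi] using hw ⟨i, hi⟩, ?_⟩
    rw [← sum_coe_sort]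
    simp [Fintype.linearCombination_apply]

end NonnegSpan

section Topology

variable {ι E : Type*} [AddCommGroup E] [Module ℝ E] [TopologicalSpace E]
  [IsTopologicalAddGroup E] [ContinuousSMul ℝ E] [T2Space E] {v : ι → E}

theorem isClosed_nonnegSpan_of_linearIndepOn {s : Finset ι} (hs : LinearIndepOn ℝ v (s : Set ι)) :
    IsClosed (nonnegSpan v s) := by
  rw [nonnegSpan_eq_image_linearCombination]
  have hinj := linearIndependent_iff_injective_fintypeLinearCombination.1 hs
  exact (LinearMap.isClosedEmbedding_of_injective (LinearMap.ker_eq_bot.2 hinj)).isClosedMap _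
    isClosed_Ici

theorem isClosed_nonnegSpan (t : Finset ι) : IsClosed (nonnegSpan v t) := by
  classical
  have hunion : nonnegSpan v t =
      ⋃ s ∈ {s : Finset ι | s ⊆ t ∧ LinearIndepOn ℝ v (s : Set ι)}, nonnegSpan v s := by
    ext x
    simp only [Set.mem_iUnion, Set.mem_ofPred_eq, exists_prop]
    constructor
    · intro hx
      obtain ⟨s, hst, hs, hxs⟩ := exists_linearIndepOn_of_mem_nonnegSpan hx
      exact ⟨s, ⟨hst, hs⟩, hxs⟩
    · rintro ⟨s, ⟨hst, -⟩, hxs⟩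
      exact nonnegSpan_mono hst hxs
  rw [hunion]
  exact (t.powerset.finite_toSet.subset fun s hs => mem_powerset.2 hs.1).isClosed_biUnion
    fun s hs => isClosed_nonnegSpan_of_linearIndepOn hs.2

theorem LinearMap.isClosed_image_nonneg [Fintype ι] (f : (ι → ℝ) →ₗ[ℝ] E) :
    IsClosed (f '' {w | 0 ≤ w}) := by
  classical
  convert isClosed_nonnegSpan (v := fun i => f fun j => if i = j then 1 else 0) univ using 1
  ext x
  simp only [nonnegSpan, Set.mem_image, Set.mem_ofPred_eq, mem_univ, forall_const,
    ← f.pi_apply_eq_sum_univ]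
  rfl

end Topology

namespace Matrix

variable {p η : Type*} [Fintype p] [Fintype η]

theorem exists_dual_of_not_exists_nonneg_mulVec_eq
    (M : Matrix p η ℝ) (d : p → ℝ) (h : ¬ ∃ x, 0 ≤ x ∧ M *ᵥ x = d) :
    ∃ u, 0 ≤ Mᵀ *ᵥ u ∧ d ⬝ᵥ u < 0 := by
  classical
  let K : ProperCone ℝ (p → ℝ) :=
    ⟨(PointedCone.positive ℝ (η → ℝ)).map M.mulVecLin, M.mulVecLin.isClosed_image_nonneg⟩
  obtain ⟨f, hfK, hfd⟩ := K.hyperplane_separation_point (x₀ := d) h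
  set u : p → ℝ := fun i => f fun j => if i = j then 1 else 0
  have hf : ∀ z, f z = z ⬝ᵥ u := fun z => (f : (p → ℝ) →ₗ[ℝ] ℝ).pi_apply_eq_sum_univ z
  refine ⟨u, fun j => ?_, hf d ▸ hfd⟩
  have hj := hfK (M *ᵥ Pi.single j 1) ⟨Pi.single j 1, Pi.single_nonneg.2 zero_le_one, rfl⟩
  rwa [hf, mulVec_single_one] at hj

theorem exists_dual_of_not_exists_nonneg_mulVec_le [DecidableEq p] (M : Matrix p η ℝ) (d : p → ℝ)
    (h : ¬ ∃ x, 0 ≤ x ∧ M *ᵥ x ≤ d) : ∃ u, 0 ≤ u ∧ 0 ≤ Mᵀ *ᵥ u ∧ d ⬝ᵥ u < 0 := by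
  have hslack : ¬ ∃ x, 0 ≤ x ∧ fromCols M (1 : Matrix p p ℝ) *ᵥ x = d := by
    rintro ⟨x, hx, hMx⟩
    refine h ⟨x ∘ Sum.inl, fun j => hx _, ?_⟩
    rw [← hMx, fromCols_mulVec, one_mulVec]
    exact le_add_of_nonneg_right fun i => hx _
  obtain ⟨u, hu, hdu⟩ := exists_dual_of_not_exists_nonneg_mulVec_eq _ d hslack
  rw [transpose_fromCols, fromRows_mulVec, transpose_one, one_mulVec] at hu
  exact ⟨u, fun i => hu (Sum.inr i), fun j => hu (Sum.inl j), hdu⟩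

theorem neg_dotProduct_le_of_feasible {A : Matrix p η ℝ} {a : p → ℝ} {c x : η → ℝ} {u : p → ℝ}
    (hAx : A *ᵥ x ≤ a) (hx : 0 ≤ x) (hAu : -(Aᵀ *ᵥ u) ≤ c) (hu : 0 ≤ u) :
    -(a ⬝ᵥ u) ≤ c ⬝ᵥ x :=
  calc -(a ⬝ᵥ u) ≤ -(A *ᵥ x ⬝ᵥ u) := neg_le_neg (dotProduct_le_dotProduct_of_nonneg_right hAx hu)
    _ = -(Aᵀ *ᵥ u) ⬝ᵥ x := by
      rw [neg_dotProduct, mulVec_transpose, ← dotProduct_mulVec, dotProduct_comm]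
    _ ≤ c ⬝ᵥ x := dotProduct_le_dotProduct_of_nonneg_right hAu hx

theorem exists_homogeneous_dual_of_not_exists (A : Matrix p η ℝ) (a : p → ℝ) (c : η → ℝ) (r : ℝ)
    (h : ¬ ∃ x, A *ᵥ x ≤ a ∧ c ⬝ᵥ x ≤ r ∧ 0 ≤ x) :
    ∃ (u : p → ℝ) (t : ℝ), 0 ≤ u ∧ 0 ≤ t ∧ 0 ≤ Aᵀ *ᵥ u + t • c ∧ a ⬝ᵥ u + t * r < 0 := by
  classical
  obtain ⟨w, hw, hMw, hdw⟩ :=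
    (fromRows A (replicateRow Unit c)).exists_dual_of_not_exists_nonneg_mulVec_le
      (Sum.elim a fun _ => r) fun ⟨x, hx, hMx⟩ => h ⟨x, fun i => hMx (.inl i), hMx (.inr ()), hx⟩
  refine ⟨w ∘ Sum.inl, w (.inr ()), fun i => hw _, hw _, fun j => ?_, ?_⟩
  · simpa [transpose_fromRows, mulVec, dotProduct, mul_comm] using hMw j
  · simpa [dotProduct, Fintype.sum_sum_type, mul_comm] using hdw

theorem not_exists_nonneg_iff_exists_dual (A : Matrix p η ℝ) (a : p → ℝ) (c : η → ℝ) (r : ℝ)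
    (hfeas : ∃ x, A *ᵥ x ≤ a ∧ 0 ≤ x) :
    (¬ ∃ x, A *ᵥ x ≤ a ∧ c ⬝ᵥ x ≤ r ∧ 0 ≤ x) ↔ ∃ u, -(Aᵀ *ᵥ u) ≤ c ∧ a ⬝ᵥ u < -r ∧ 0 ≤ u := by
  refine ⟨fun h => ?_, fun ⟨u, hAu, hau, hu⟩ ⟨x, hAx, hcx, hx⟩ => ?_⟩
  · obtain ⟨u, t, hu, ht, hAu, hau⟩ := exists_homogeneous_dual_of_not_exists A a c r h
    obtain rfl | ht := ht.eq_or_lt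
    · obtain ⟨x, hAx, hx⟩ := hfeas
      have := neg_dotProduct_le_of_feasible hAx hx (c := 0) (by simpa using hAu) hu
      simp only [zero_dotProduct] at this
      linarith
    refine ⟨t⁻¹ • u, fun j => ?_, ?_, smul_nonneg (inv_nonneg.2 ht.le) hu⟩
    · have := hAu j
      simp only [Pi.neg_apply, mulVec_smul, Pi.smul_apply, smul_eq_mul, Pi.add_apply,
        Pi.zero_apply] at this ⊢
      rw [neg_le, ← div_eq_inv_mul, le_div_iff₀ ht]
      linarith
    · rw [dotProduct_smul, smul_eq_mul, inv_mul_lt_iff₀ ht]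
      linarith
  · linarith [neg_dotProduct_le_of_feasible hAx hx hAu hu]

end Matrix

theorem stmt_4_general
    (n m q l : ℕ)
    (C : Matrix (Fin n) (Fin m) ℝ) (A : Matrix (Fin q) (Fin n) ℝ)
    (B : Matrix (Fin l) (Fin m) ℝ)
    (a : Fin q → ℝ) (b : Fin l → ℝ) (g : Fin n → ℝ) (e : Fin m → ℝ)
    (X : Set (Fin n → ℝ)) (Y : Set (Fin m → ℝ))
    (hX : X = {x | A.mulVec x ≤ a ∧ 0 ≤ x})
    (hY : Y = {y | B.mulVec y ≤ b ∧ 0 ≤ y})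
    (hXne : X.Nonempty)
    (h : ℝ) :
    (¬ ∃ (x : Fin n → ℝ) (y : Fin m → ℝ),
        A.mulVec x ≤ a ∧ x ⬝ᵥ C.mulVec y + g ⬝ᵥ x + e ⬝ᵥ y ≤ h ∧
        B.mulVec y ≤ b ∧ 0 ≤ x ∧ 0 ≤ y) ↔
      (∀ y ∈ Y, ∃ u : Fin q → ℝ,
        -(Aᵀ.mulVec u) ≤ C.mulVec y + g ∧ a ⬝ᵥ u < e ⬝ᵥ y - h ∧ 0 ≤ u) := by
  subst hX hY
  have hobjective (x y) :
      x ⬝ᵥ C *ᵥ y + g ⬝ᵥ x + e ⬝ᵥ y ≤ h ↔ (C *ᵥ y + g) ⬝ᵥ x ≤ h - e ⬝ᵥ y := by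
    rw [add_dotProduct, dotProduct_comm x, dotProduct_comm g, le_sub_iff_add_le]
  have hdual (y) := not_exists_nonneg_iff_exists_dual A a (C *ᵥ y + g) (h - e ⬝ᵥ y) hXne
  simp only [neg_sub] at hdual
  simp only [← hdual, hobjective, Set.mem_ofPred_eq, not_exists, not_and, and_imp]
  exact ⟨fun H y hBy hy x hAx hxy hx => H x y hAx hxy hBy hx hy,
    fun H x y hAx hxy hBy hx hy => H y hBy hy x hAx hxy hx⟩

/-- Lemma 2 of the paper: inconsistency of the parametric bilinear system is
equivalent to consistency of the dual linear system for every `y ∈ Y`. -/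
theorem stmt_4
    (n m q l : ℕ) (hn : 0 < n) (hm : 0 < m) (hq : 0 < q) (hl : 0 < l)
    (C : Matrix (Fin n) (Fin m) ℝ) (A : Matrix (Fin q) (Fin n) ℝ)
    (B : Matrix (Fin l) (Fin m) ℝ)
    (a : Fin q → ℝ) (b : Fin l → ℝ) (g : Fin n → ℝ) (e : Fin m → ℝ)
    (X : Set (Fin n → ℝ)) (Y : Set (Fin m → ℝ))
    (hX : X = {x | A.mulVec x ≤ a ∧ 0 ≤ x})
    (hY : Y = {y | B.mulVec y ≤ b ∧ 0 ≤ y})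
    (hXne : X.Nonempty) (hYne : Y.Nonempty)
    (hXbd : Bornology.IsBounded X) (hYbd : Bornology.IsBounded Y)
    (h : ℝ) :
    (¬ ∃ (x : Fin n → ℝ) (y : Fin m → ℝ),
        A.mulVec x ≤ a ∧ x ⬝ᵥ C.mulVec y + g ⬝ᵥ x + e ⬝ᵥ y ≤ h ∧
        B.mulVec y ≤ b ∧ 0 ≤ x ∧ 0 ≤ y) ↔
      (∀ y ∈ Y, ∃ u : Fin q → ℝ,
        -(Aᵀ.mulVec u) ≤ C.mulVec y + g ∧ a ⬝ᵥ u < e ⬝ᵥ y - h ∧ 0 ≤ u) :=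
  stmt_4_general n m q l C A B a b g e X Y hX hY hXne h
end

section
/- Assume X and Y are nonempty and bounded, and let h* be the minimum of z over X × Y. If the system {−Aᵀu − C y ≤ g, a·u − e·y < −h*, u ≥ 0} has a solution (u, y) ∈ ℝ^q × ℝ^m, then there exists y* ∈ Y such that the system {−Aᵀu ≤ C y* + g, a·u < e·y* − h*, u ≥ 0} has no solution u; moreover, for any y* ∈ Y with this property the system {A x ≤ a, x·(C y* + g) ≤ h* − e·y*, x ≥ 0} has a solution x, and any such solution x* together with y* satisfies z(x*, y*) = h*, i.e. (x*, y*) is an optimal solution of the disjoint bilinear programming problem. -/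
/-!
At a minimiser `(x₀, y₀)` no dual certificate `u` can exist for `y₀`: by weak LP duality it would
give `x₀ ⬝ᵥ (C y₀ + g) > h* - e ⬝ᵥ y₀`, i.e. `z x₀ y₀ > h*`. Conversely, if `y*` has no dual
certificate, strong duality (Farkas' lemma) for the inner linear program
`min_{x ∈ X} x ⬝ᵥ (C y* + g)` yields a feasible `x` of value at most `h* - e ⬝ᵥ y*`, and
minimality of `h*` makes `(x, y*)` optimal. Farkas' lemma comes from separating a point from a
finitely generated cone, which is closed by the conic version of Carathéodory's theorem.
-/

open Matrix Finset

section ConicHull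
variable {𝕜 E ι : Type*}

section OrderedSemiring
variable [Semiring 𝕜] [PartialOrder 𝕜] [AddCommMonoid E] [Module 𝕜 E]

variable (𝕜) in
def conicHull (v : ι → E) (s : Finset ι) : Set E :=
  {x | ∃ c : ι → 𝕜, (∀ i ∈ s, 0 ≤ c i) ∧ ∑ i ∈ s, c i • v i = x}

lemma conicHull_mono [DecidableEq ι] {v : ι → E} {s t : Finset ι} (h : s ⊆ t) :
    conicHull 𝕜 v s ⊆ conicHull 𝕜 v t := by
  rintro _ ⟨c, hc, rfl⟩
  refine ⟨fun i => if i ∈ s then c i else 0, fun i _ => ?_, ?_⟩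
  · by_cases hi : i ∈ s <;> simp [hi, hc i]
  · rw [← sum_subset h fun i _ hi => by simp [hi]]
    exact sum_congr rfl fun i hi => by simp [hi]

end OrderedSemiring

variable [Field 𝕜] [LinearOrder 𝕜] [IsStrictOrderedRing 𝕜] [AddCommGroup E] [Module 𝕜 E]
  {v : ι → E} {s : Finset ι}

lemma exists_pos_of_not_linearIndepOn (h : ¬ LinearIndepOn 𝕜 v s) :
    ∃ d : ι → 𝕜, ∑ i ∈ s, d i • v i = 0 ∧ ∃ i ∈ s, 0 < d i := by
  obtain ⟨d, hd, i, hi, hdi⟩ := not_linearIndepOn_finset_iff.mp h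
  rcases hdi.lt_or_gt with hneg | hpos
  · exact ⟨-d, by simp [hd], i, hi, neg_pos.mpr hneg⟩
  · exact ⟨d, hd, i, hi, hpos⟩

lemma conicHull_subset_biUnion_erase [DecidableEq ι] (h : ¬ LinearIndepOn 𝕜 v s) :
    conicHull 𝕜 v s ⊆ ⋃ j ∈ s, conicHull 𝕜 v (s.erase j) := by
  rintro _ ⟨c, hc, rfl⟩
  -- Move along a positive linear relation `d` until the first coefficient of `c` vanishes.
  obtain ⟨d, hd, i₀, hi₀, hdi₀⟩ := exists_pos_of_not_linearIndepOn h
  obtain ⟨j, hj, hmin⟩ := (s.filter fun i => 0 < d i).exists_min_image (fun i => c i / d i)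
    ⟨i₀, mem_filter.mpr ⟨hi₀, hdi₀⟩⟩
  rw [mem_filter] at hj
  set r := c j / d j
  have hr : 0 ≤ r := div_nonneg (hc j hj.1) hj.2.le
  refine Set.mem_biUnion hj.1 ⟨fun i => c i - r * d i, fun i hi => ?_, ?_⟩
  · have hi := (mem_erase.mp hi).2
    rcases le_or_gt (d i) 0 with hdi | hdi
    · nlinarith [hc i hi]
    · exact sub_nonneg.mpr ((le_div_iff₀ hdi).mp (hmin i (mem_filter.mpr ⟨hi, hdi⟩)))
  · have hcj : (c j - r * d j) • v j = 0 := by simp [r, div_mul_cancel₀ _ hj.2.ne']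
    rw [sum_erase s (f := fun i => (c i - r * d i) • v i) hcj]
    simp only [sub_smul, mul_smul, sum_sub_distrib, ← smul_sum, hd, smul_zero, sub_zero]

end ConicHull

section Topology
variable {E ι : Type*} [AddCommGroup E] [Module ℝ E] [TopologicalSpace E] [T2Space E]
  [IsTopologicalAddGroup E] [ContinuousSMul ℝ E] {v : ι → E} {s : Finset ι}

lemma isClosed_conicHull_of_linearIndepOn (h : LinearIndepOn ℝ v s) :
    IsClosed (conicHull ℝ v s) := by
  classical
  have himage : conicHull ℝ v s = Fintype.linearCombination ℝ (fun i : s => v i) '' Set.Ici 0 := by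
    ext x
    simp only [conicHull, Set.mem_ofPred_eq, Set.mem_image, Set.mem_Ici,
      Fintype.linearCombination_apply]
    constructor
    · rintro ⟨c, hc, rfl⟩
      exact ⟨fun i => c i, fun i => hc i i.2, Finset.sum_coe_sort s fun i => c i • v i⟩
    · rintro ⟨c, hc, rfl⟩
      refine ⟨fun i => if hi : i ∈ s then c ⟨i, hi⟩ else 0,
        fun i hi => by simpa [hi] using hc ⟨i, hi⟩, ?_⟩
      rw [← sum_coe_sort s]
      simp
  rw [himage]
  refine (LinearMap.isClosedEmbedding_of_injective ?_).isClosedMap _ isClosed_Ici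
  exact LinearMap.ker_eq_bot.mpr h.fintypeLinearCombination_injective

lemma isClosed_conicHull (v : ι → E) (s : Finset ι) : IsClosed (conicHull ℝ v s) := by
  classical
  induction s using Finset.strongInduction with
  | H s ih =>
    by_cases h : LinearIndepOn ℝ v s
    · exact isClosed_conicHull_of_linearIndepOn h
    · have : conicHull ℝ v s = ⋃ j ∈ s, conicHull ℝ v (s.erase j) :=
        (conicHull_subset_biUnion_erase h).antisymm
          (Set.iUnion₂_subset fun j _ => conicHull_mono (s.erase_subset j))
      rw [this]
      exact s.finite_toSet.isClosed_biUnion fun j hj => ih _ (erase_ssubset hj)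

end Topology

namespace Matrix
variable {ι κ : Type*} [Fintype κ]

lemma isClosed_image_mulVec_nonneg (M : Matrix ι κ ℝ) : IsClosed ((M *ᵥ ·) '' Set.Ici 0) := by
  convert isClosed_conicHull (fun j => Mᵀ j) univ using 1
  ext y
  simp [conicHull, ← vecMul_transpose, vecMul_eq_sum, Pi.le_def]

variable [Fintype ι]

theorem farkas_mulVec_eq (M : Matrix ι κ ℝ) (d : ι → ℝ) (h : ∀ x, 0 ≤ x → M *ᵥ x ≠ d) :
    ∃ w, 0 ≤ w ᵥ* M ∧ w ⬝ᵥ d < 0 := by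
  classical
  let K : ProperCone ℝ (ι → ℝ) :=
    ⟨(PointedCone.positive ℝ (κ → ℝ)).map (M.mulVecLin.restrictScalars _),
      M.isClosed_image_mulVec_nonneg⟩
  obtain ⟨f, hfK, hfd⟩ := K.hyperplane_separation_point (x₀ := d) fun ⟨x, hx, hxd⟩ => h x hx hxd
  set w : ι → ℝ := fun i => f (Pi.single i 1)
  have hf : ∀ y, f y = w ⬝ᵥ y := fun y => by
    change (f : (ι → ℝ) →ₗ[ℝ] ℝ) y = _
    rw [LinearMap.pi_apply_eq_sum_univ, dotProduct_comm]
    refine sum_congr rfl fun i _ => ?_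
    exact congrArg (y i * f ·) (funext fun j => by simp [Pi.single_apply, eq_comm])
  refine ⟨w, fun k => ?_, by rwa [← hf]⟩
  have := hfK (M *ᵥ Pi.single k 1) ⟨Pi.single k 1, Pi.single_nonneg.mpr zero_le_one, rfl⟩
  rwa [hf, dotProduct_mulVec, dotProduct_single_one] at this

theorem farkas_mulVec_le (M : Matrix ι κ ℝ) (d : ι → ℝ) (h : ∀ x, 0 ≤ x → ¬ M *ᵥ x ≤ d) :
    ∃ w, 0 ≤ w ∧ 0 ≤ w ᵥ* M ∧ w ⬝ᵥ d < 0 := by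
  classical
  obtain ⟨w, hw, hwd⟩ := farkas_mulVec_eq (fromCols M (1 : Matrix ι ι ℝ)) d fun x hx hxd => by
    refine h (x ∘ Sum.inl) (fun j => hx _) ?_
    rw [← hxd, fromCols_mulVec, one_mulVec]
    exact le_add_of_nonneg_right fun i => hx _
  rw [vecMul_fromCols, vecMul_one] at hw
  exact ⟨w, fun i => hw (Sum.inr i), fun j => hw (Sum.inl j), hwd⟩

variable {A : Matrix ι κ ℝ} {a : ι → ℝ} {c x : κ → ℝ} {u : ι → ℝ}

lemma weak_duality (hx : A *ᵥ x ≤ a) (hx₀ : 0 ≤ x) (hu : -(Aᵀ *ᵥ u) ≤ c) (hu₀ : 0 ≤ u) :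
    -(a ⬝ᵥ u) ≤ x ⬝ᵥ c :=
  calc -(a ⬝ᵥ u) ≤ -(A *ᵥ x ⬝ᵥ u) := neg_le_neg (dotProduct_le_dotProduct_of_nonneg_right hx hu₀)
    _ = x ⬝ᵥ -(Aᵀ *ᵥ u) := by
      rw [dotProduct_neg, mulVec_transpose, dotProduct_comm x, ← dotProduct_mulVec, dotProduct_comm]
    _ ≤ x ⬝ᵥ c := dotProduct_le_dotProduct_of_nonneg_left hu hx₀

theorem exists_primal_le_of_not_exists_dual_gt {β : ℝ} (hfeas : A *ᵥ x ≤ a) (hx₀ : 0 ≤ x)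
    (hdual : ¬ ∃ u, -(Aᵀ *ᵥ u) ≤ c ∧ a ⬝ᵥ u < -β ∧ 0 ≤ u) :
    ∃ x, A *ᵥ x ≤ a ∧ x ⬝ᵥ c ≤ β ∧ 0 ≤ x := by
  by_contra! hprimal
  obtain ⟨w, hw, hwM, hwd⟩ := farkas_mulVec_le (fromRows A (replicateRow Unit c))
    (Sum.elim a fun _ => β) fun y hy hyd => by
      refine hprimal y (fun i => hyd (Sum.inl i)) ?_ hy
      simpa [replicateRow_mulVec_eq_const, dotProduct_comm] using hyd (Sum.inr ())
  -- `w = (u, t)` certifies infeasibility of `A x ≤ a, c ⬝ᵥ x ≤ β`;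
  -- feasibility of `x` rules out `t = 0`.
  set u := w ∘ Sum.inl
  set t := w (Sum.inr ())
  have hut : 0 ≤ u ᵥ* A + t • c := by
    intro j
    simpa [u, t, vecMul, dotProduct, replicateRow] using hwM j
  have hobj : a ⬝ᵥ u + t * β < 0 := by
    simpa [u, t, dotProduct, Fintype.sum_sum_type, mul_comm] using hwd
  have hu : 0 ≤ u := fun i => hw _
  rcases (show 0 ≤ t from hw _).eq_or_lt with ht | ht
  · rw [← ht, zero_smul, add_zero] at hut
    rw [← ht, zero_mul, add_zero] at hobj
    have := weak_duality hfeas hx₀ (c := 0) (by simpa [mulVec_transpose] using hut) hu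
    rw [dotProduct_zero] at this
    linarith
  · refine hdual ⟨t⁻¹ • u, fun j => ?_, ?_, smul_nonneg (inv_nonneg.mpr ht.le) hu⟩
    · have := hut j
      simp only [Pi.zero_apply, Pi.add_apply, Pi.smul_apply, smul_eq_mul] at this
      rw [Pi.neg_apply, mulVec_transpose, smul_vecMul, Pi.smul_apply, smul_eq_mul, neg_le,
        ← div_eq_inv_mul, le_div_iff₀ ht]
      linarith
    · rw [dotProduct_smul, smul_eq_mul, ← div_eq_inv_mul, div_lt_iff₀ ht]
      linarith

end Matrix

theorem stmt_8_general
    (n m q : ℕ)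
    (C : Matrix (Fin n) (Fin m) ℝ) (A : Matrix (Fin q) (Fin n) ℝ)
    (a : Fin q → ℝ) (g : Fin n → ℝ) (e : Fin m → ℝ)
    (z : (Fin n → ℝ) → (Fin m → ℝ) → ℝ)
    (hz : ∀ x y, z x y = x ⬝ᵥ C.mulVec y + g ⬝ᵥ x + e ⬝ᵥ y)
    (X : Set (Fin n → ℝ)) (Y : Set (Fin m → ℝ))
    (hX : X = {x | A.mulVec x ≤ a ∧ 0 ≤ x})
    (hstar : ℝ) (hmin : IsLeast (Set.image2 z X Y) hstar) :
    (∃ ys ∈ Y, ¬ ∃ u : Fin q → ℝ,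
        -(Aᵀ.mulVec u) ≤ C.mulVec ys + g ∧ a ⬝ᵥ u < e ⬝ᵥ ys - hstar ∧ 0 ≤ u) ∧
    (∀ ys ∈ Y,
      (¬ ∃ u : Fin q → ℝ,
        -(Aᵀ.mulVec u) ≤ C.mulVec ys + g ∧ a ⬝ᵥ u < e ⬝ᵥ ys - hstar ∧ 0 ≤ u) →
      (∃ x : Fin n → ℝ,
        A.mulVec x ≤ a ∧ x ⬝ᵥ (C.mulVec ys + g) ≤ hstar - e ⬝ᵥ ys ∧ 0 ≤ x) ∧
      (∀ x : Fin n → ℝ,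
        A.mulVec x ≤ a → x ⬝ᵥ (C.mulVec ys + g) ≤ hstar - e ⬝ᵥ ys → 0 ≤ x →
        z x ys = hstar)) := by
  subst hX
  have hz' : ∀ x y, z x y = x ⬝ᵥ (C *ᵥ y + g) + e ⬝ᵥ y := fun x y => by
    rw [hz, dotProduct_add, dotProduct_comm g]
  obtain ⟨x₀, ⟨hAx₀, hx₀⟩, y₀, hy₀, hz₀⟩ := hmin.1
  refine ⟨⟨y₀, hy₀, fun ⟨u, hu, hau, hu₀⟩ => ?_⟩,
    fun ys hys hno => ⟨?_, fun x hx hxc hx_nonneg => ?_⟩⟩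
  · have := weak_duality hAx₀ hx₀ hu hu₀
    rw [hz'] at hz₀
    linarith
  · exact exists_primal_le_of_not_exists_dual_gt hAx₀ hx₀
      fun ⟨u, hu, hau, hu₀⟩ => hno ⟨u, hu, by linarith, hu₀⟩
  · have := hmin.2 (Set.mem_image2_of_mem ⟨hx, hx_nonneg⟩ hys)
    rw [hz'] at this ⊢
    linarith

/-- Theorem 3, property 2) of the paper. -/
theorem stmt_8
    (n m q l : ℕ) (hn : 0 < n) (hm : 0 < m) (hq : 0 < q) (hl : 0 < l)
    (C : Matrix (Fin n) (Fin m) ℝ) (A : Matrix (Fin q) (Fin n) ℝ)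
    (B : Matrix (Fin l) (Fin m) ℝ)
    (a : Fin q → ℝ) (b : Fin l → ℝ) (g : Fin n → ℝ) (e : Fin m → ℝ)
    (z : (Fin n → ℝ) → (Fin m → ℝ) → ℝ)
    (hz : ∀ x y, z x y = x ⬝ᵥ C.mulVec y + g ⬝ᵥ x + e ⬝ᵥ y)
    (X : Set (Fin n → ℝ)) (Y : Set (Fin m → ℝ))
    (hX : X = {x | A.mulVec x ≤ a ∧ 0 ≤ x})
    (hY : Y = {y | B.mulVec y ≤ b ∧ 0 ≤ y})
    (hXne : X.Nonempty) (hYne : Y.Nonempty)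
    (hXbd : Bornology.IsBounded X) (hYbd : Bornology.IsBounded Y)
    (hstar : ℝ) (hmin : IsLeast (Set.image2 z X Y) hstar)
    (hcons : ∃ (u : Fin q → ℝ) (y : Fin m → ℝ),
        -(Aᵀ.mulVec u) - C.mulVec y ≤ g ∧ a ⬝ᵥ u - e ⬝ᵥ y < -hstar ∧ 0 ≤ u) :
    (∃ ys ∈ Y, ¬ ∃ u : Fin q → ℝ,
        -(Aᵀ.mulVec u) ≤ C.mulVec ys + g ∧ a ⬝ᵥ u < e ⬝ᵥ ys - hstar ∧ 0 ≤ u) ∧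
    (∀ ys ∈ Y,
      (¬ ∃ u : Fin q → ℝ,
        -(Aᵀ.mulVec u) ≤ C.mulVec ys + g ∧ a ⬝ᵥ u < e ⬝ᵥ ys - hstar ∧ 0 ≤ u) →
      (∃ x : Fin n → ℝ,
        A.mulVec x ≤ a ∧ x ⬝ᵥ (C.mulVec ys + g) ≤ hstar - e ⬝ᵥ ys ∧ 0 ≤ x) ∧
      (∀ x : Fin n → ℝ,
        A.mulVec x ≤ a → x ⬝ᵥ (C.mulVec ys + g) ≤ hstar - e ⬝ᵥ ys → 0 ≤ x →
        z x ys = hstar)) :=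
  stmt_8_general n m q C A a g e z hz X Y hX hstar hmin
end
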